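/- arXiv:2009.08486 — 6 statements merged into one kernel-verified Lean document; each statement's English description precedes it below -/
import Mathlib

section
/- Let n ≥ 5 be an integer, Ω ⊂ ℝⁿ a bounded open set, y₀ ∈ Ω, and H : closure(Ω) → ℝ a continuous function. Suppose that for each λ > 0 a measurable function θ_λ : Ω → ℝ satisfies θ_λ(x) = c_n^{(n-2)/4} λ^{-(n-2)/2} H(x) + R_λ(x) with sup_{x∈Ω} |R_λ(x)| ≤ M λ^{-(n+2)/2} for a constant M independent of λ and x. Then, as λ → +∞, ∫_Ω δ_{y₀,λ}(x) θ_λ(x) dx = c_n^{(n-2)/2} λ^{-(n-2)} ∫_Ω H(x) |x−y₀|^{-(n-2)} dx + o(λ^{-(n-2)}). -/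
open MeasureTheory Filter Asymptotics

/-!
Up to the constant `c^{(n-2)/4}`, the bubble is `λ^{-(n-2)/2} g_λ(|x - y₀|)` where
`g_λ(r) = (λ² / (1 + λ² r²))^{(n-2)/2}` increases to `r^{-(n-2)}`, which is integrable near `y₀`.
The principal part of `θ_λ` therefore contributes `c^{(n-2)/2} λ^{-(n-2)} ∫_Ω g_λ H`, and
`∫_Ω g_λ H → ∫_Ω H |x - y₀|^{-(n-2)}` by dominated convergence. Since `g_λ ≤ |x - y₀|^{-(n-2)}`,
the remainder contributes `O(λ^{-(n-2)/2} λ^{-(n+2)/2}) = O(λ^{-n}) = o(λ^{-(n-2)})`.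
-/

open Real Topology

/-- `λ^{s/2}` times the bubble profile `(λ / (1 + λ² r²))^{s/2}`. -/
noncomputable def bubbleProfile (s lam r : ℝ) : ℝ := (lam ^ 2 / (1 + lam ^ 2 * r ^ 2)) ^ (s / 2)

lemma bubbleProfile_nonneg (s lam r : ℝ) : 0 ≤ bubbleProfile s lam r :=
  rpow_nonneg (by positivity) _

lemma rpow_div_one_add_eq_rpow_neg_mul_bubbleProfile (s r : ℝ) {lam : ℝ} (hlam : 0 < lam) :
    (lam / (1 + lam ^ 2 * r ^ 2)) ^ (s / 2) = lam ^ (-(s / 2)) * bubbleProfile s lam r := by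
  have h : lam / (1 + lam ^ 2 * r ^ 2) = lam⁻¹ * (lam ^ 2 / (1 + lam ^ 2 * r ^ 2)) := by
    field_simp
  rw [h, mul_rpow (inv_nonneg.2 hlam.le) (by positivity), inv_rpow hlam.le, ← rpow_neg hlam.le,
    bubbleProfile]

lemma inv_sq_rpow_half {r : ℝ} (hr : 0 ≤ r) (s : ℝ) : ((r ^ 2)⁻¹) ^ (s / 2) = (r ^ s)⁻¹ := by
  rw [inv_rpow (by positivity), ← rpow_natCast, ← rpow_mul hr]
  ring_nf

lemma bubbleProfile_le_inv_rpow {s : ℝ} (hs : 0 ≤ s) (lam : ℝ) {r : ℝ} (hr : 0 < r) :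
    bubbleProfile s lam r ≤ (r ^ s)⁻¹ := by
  rw [← inv_sq_rpow_half hr.le]
  refine rpow_le_rpow (by positivity) ?_ (by positivity)
  rw [← one_div, div_le_div_iff₀ (by positivity) (by positivity)]
  linarith

lemma tendsto_bubbleProfile_atTop (s : ℝ) {r : ℝ} (hr : 0 < r) :
    Tendsto (fun lam => bubbleProfile s lam r) atTop (𝓝 (r ^ s)⁻¹) := by
  have hinv : Tendsto (fun lam : ℝ => ((lam ^ 2)⁻¹ + r ^ 2)⁻¹) atTop (𝓝 (r ^ 2)⁻¹) := by
    simpa using ((tendsto_inv_atTop_zero.comp (tendsto_pow_atTop two_ne_zero)).add_const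
      (r ^ 2)).inv₀ (by positivity)
  have hbase : Tendsto (fun lam : ℝ => lam ^ 2 / (1 + lam ^ 2 * r ^ 2)) atTop (𝓝 (r ^ 2)⁻¹) := by
    refine hinv.congr' ?_
    filter_upwards [eventually_ne_atTop 0] with lam hlam
    field_simp
  rw [← inv_sq_rpow_half hr.le]
  exact hbase.rpow_const (Or.inl (by positivity))

lemma continuous_bubbleProfile_norm_sub {E : Type*} [SeminormedAddCommGroup E] {s : ℝ}
    (hs : 0 ≤ s) (lam : ℝ) (y₀ : E) : Continuous fun x => bubbleProfile s lam ‖x - y₀‖ :=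
  (continuous_const.div (by fun_prop) fun x => by positivity).rpow_const
    fun _ => Or.inr (by positivity)

theorem integrableOn_inv_norm_sub_rpow_of_isBounded {E : Type*} [NormedAddCommGroup E]
    [NormedSpace ℝ E] [FiniteDimensional ℝ E] [MeasurableSpace E] [BorelSpace E]
    (μ : Measure E) [μ.IsAddHaarMeasure] (hd : 1 ≤ Module.finrank ℝ E) {s : ℝ}
    (hs : s < Module.finrank ℝ E) (y₀ : E) {Ω : Set E} (hΩ : Bornology.IsBounded Ω) :
    IntegrableOn (fun x => (‖x - y₀‖ ^ s)⁻¹) Ω μ := by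
  obtain ⟨R, hR⟩ := hΩ.subset_ball y₀
  have h0 : IntegrableOn (fun x : E => (‖x‖ ^ s)⁻¹) (Metric.ball 0 R) μ := by
    refine integrableOn_ball_of_norm_le_rpow hd hs (C := 1) (ae_of_all _ fun x => ?_)
      (measurable_norm.pow_const s).inv.aestronglyMeasurable
    rw [one_mul, rpow_neg (norm_nonneg _), norm_inv, norm_of_nonneg (by positivity)]
  rw [← (measurePreserving_sub_right μ y₀).integrableOn_comp_preimage
    (measurableEmbedding_subRight y₀)] at h0
  refine h0.mono_set fun x hx => ?_
  simpa [dist_eq_norm] using hR hx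

section

variable {E : Type*} [NormedAddCommGroup E] [MeasurableSpace E] {μ : Measure E} {Ω : Set E}
  {y₀ : E} {s : ℝ}

lemma setIntegral_bubble_mul_eq {lam : ℝ} (hlam : 0 < lam) (a b : ℝ) {H θ : E → ℝ}
    (hH : IntegrableOn (fun x => bubbleProfile s lam ‖x - y₀‖ * H x) Ω μ)
    (hR : IntegrableOn
      (fun x => bubbleProfile s lam ‖x - y₀‖ * (θ x - b * lam ^ (-(s / 2)) * H x)) Ω μ) :
    ∫ x in Ω, (a * (lam / (1 + lam ^ 2 * ‖x - y₀‖ ^ 2)) ^ (s / 2)) * θ x ∂μ =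
      lam ^ (-s) * (a * b * ∫ x in Ω, bubbleProfile s lam ‖x - y₀‖ * H x ∂μ +
        a * (lam ^ (s / 2) *
          ∫ x in Ω, bubbleProfile s lam ‖x - y₀‖ * (θ x - b * lam ^ (-(s / 2)) * H x) ∂μ)) := by
  have hsplit : ∀ x, (a * (lam / (1 + lam ^ 2 * ‖x - y₀‖ ^ 2)) ^ (s / 2)) * θ x =
      a * lam ^ (-(s / 2)) * (b * lam ^ (-(s / 2)) * (bubbleProfile s lam ‖x - y₀‖ * H x) +
        bubbleProfile s lam ‖x - y₀‖ * (θ x - b * lam ^ (-(s / 2)) * H x)) := fun x => by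
    rw [rpow_div_one_add_eq_rpow_neg_mul_bubbleProfile _ _ hlam]; ring
  have hpow : lam ^ (-(s / 2)) * lam ^ (-(s / 2)) = lam ^ (-s) := by
    rw [← rpow_add hlam]; ring_nf
  have hpow' : lam ^ (-s) * lam ^ (s / 2) = lam ^ (-(s / 2)) := by
    rw [← rpow_add hlam]; ring_nf
  simp_rw [hsplit]
  rw [integral_const_mul, integral_add (hH.const_mul _) hR, integral_const_mul]
  linear_combination (a * b * ∫ x in Ω, bubbleProfile s lam ‖x - y₀‖ * H x ∂μ) * hpow -
    (a * ∫ x in Ω, bubbleProfile s lam ‖x - y₀‖ * (θ x - b * lam ^ (-(s / 2)) * H x) ∂μ) * hpow'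

variable [NullSingletonClass μ]

lemma ae_norm_bubbleProfile_mul_le (hs : 0 ≤ s) (hΩ : MeasurableSet Ω) {f : E → ℝ} {C : ℝ}
    (hf : ∀ x ∈ Ω, ‖f x‖ ≤ C) (lam : ℝ) :
    ∀ᵐ x ∂μ.restrict Ω, ‖bubbleProfile s lam ‖x - y₀‖ * f x‖ ≤ C * (‖x - y₀‖ ^ s)⁻¹ := by
  filter_upwards [ae_restrict_mem hΩ, (μ.restrict Ω).ae_ne y₀] with x hx hxy
  rw [norm_mul, norm_of_nonneg (bubbleProfile_nonneg _ _ _), mul_comm]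
  exact mul_le_mul (hf x hx)
    (bubbleProfile_le_inv_rpow hs lam (norm_pos_iff.2 (sub_ne_zero.2 hxy)))
    (bubbleProfile_nonneg _ _ _) ((norm_nonneg _).trans (hf x hx))

lemma tendsto_rpow_mul_setIntegral_bubbleProfile_mul (hs : 0 ≤ s) (hΩ : MeasurableSet Ω)
    (hk : IntegrableOn (fun x => (‖x - y₀‖ ^ s)⁻¹) Ω μ) {R : ℝ → E → ℝ} {M u t : ℝ} (hut : u < t)
    (hR : ∀ lam, 0 < lam → ∀ x ∈ Ω, ‖R lam x‖ ≤ M * lam ^ (-t)) :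
    Tendsto (fun lam => lam ^ u * ∫ x in Ω, bubbleProfile s lam ‖x - y₀‖ * R lam x ∂μ) atTop
      (𝓝 0) := by
  set K := ∫ x in Ω, (‖x - y₀‖ ^ s)⁻¹ ∂μ
  refine squeeze_zero_norm' (a := fun lam => M * K * lam ^ (-(t - u))) ?_ ?_
  · filter_upwards [eventually_gt_atTop 0] with lam hlam
    have hint := norm_integral_le_of_norm_le (hk.const_mul (M * lam ^ (-t)))
      (ae_norm_bubbleProfile_mul_le hs hΩ (hR lam hlam) lam)
    rw [integral_const_mul] at hint
    calc ‖lam ^ u * ∫ x in Ω, bubbleProfile s lam ‖x - y₀‖ * R lam x ∂μ‖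
        ≤ lam ^ u * (M * lam ^ (-t) * K) := by
          rw [norm_mul, norm_of_nonneg (by positivity)]
          gcongr
      _ = M * K * lam ^ (-(t - u)) := by
          rw [neg_sub, sub_eq_add_neg, rpow_add hlam]; ring
  · simpa using (tendsto_rpow_neg_atTop (sub_pos.2 hut)).const_mul (M * K)

variable [OpensMeasurableSpace E]

lemma integrableOn_bubbleProfile_mul (hs : 0 ≤ s) (hΩ : MeasurableSet Ω)
    (hk : IntegrableOn (fun x => (‖x - y₀‖ ^ s)⁻¹) Ω μ) {f : E → ℝ}
    (hfm : AEStronglyMeasurable f (μ.restrict Ω)) {C : ℝ} (hf : ∀ x ∈ Ω, ‖f x‖ ≤ C) (lam : ℝ) :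
    IntegrableOn (fun x => bubbleProfile s lam ‖x - y₀‖ * f x) Ω μ :=
  (hk.const_mul C).mono'
    ((continuous_bubbleProfile_norm_sub hs lam y₀).aestronglyMeasurable.mul hfm)
    (ae_norm_bubbleProfile_mul_le hs hΩ hf lam)

lemma tendsto_setIntegral_bubbleProfile_mul (hs : 0 ≤ s) (hΩ : MeasurableSet Ω)
    (hk : IntegrableOn (fun x => (‖x - y₀‖ ^ s)⁻¹) Ω μ) {H : E → ℝ}
    (hHm : AEStronglyMeasurable H (μ.restrict Ω)) {B : ℝ} (hH : ∀ x ∈ Ω, ‖H x‖ ≤ B) :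
    Tendsto (fun lam => ∫ x in Ω, bubbleProfile s lam ‖x - y₀‖ * H x ∂μ) atTop
      (𝓝 (∫ x in Ω, H x / ‖x - y₀‖ ^ s ∂μ)) := by
  refine tendsto_integral_filter_of_dominated_convergence _
    (.of_forall fun lam => (integrableOn_bubbleProfile_mul hs hΩ hk hHm hH lam).1)
    (.of_forall fun lam => ae_norm_bubbleProfile_mul_le hs hΩ hH lam) (hk.const_mul B) ?_
  filter_upwards [(μ.restrict Ω).ae_ne y₀] with x hxy
  rw [div_eq_inv_mul]
  exact (tendsto_bubbleProfile_atTop s (norm_pos_iff.2 (sub_ne_zero.2 hxy))).mul_const (H x)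

theorem isLittleO_setIntegral_bubble_mul_sub (hs : 0 ≤ s) (hΩ : MeasurableSet Ω)
    (hk : IntegrableOn (fun x => (‖x - y₀‖ ^ s)⁻¹) Ω μ) {H : E → ℝ}
    (hHm : AEStronglyMeasurable H (μ.restrict Ω)) {B : ℝ} (hH : ∀ x ∈ Ω, ‖H x‖ ≤ B)
    {θ : ℝ → E → ℝ} (hθm : ∀ lam, 0 < lam → AEStronglyMeasurable (θ lam) (μ.restrict Ω))
    (a b M : ℝ) {t : ℝ} (ht : s / 2 < t)
    (hθ : ∀ lam, 0 < lam → ∀ x ∈ Ω, |θ lam x - b * lam ^ (-(s / 2)) * H x| ≤ M * lam ^ (-t)) :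
    (fun lam => ∫ x in Ω, (a * (lam / (1 + lam ^ 2 * ‖x - y₀‖ ^ 2)) ^ (s / 2)) * θ lam x ∂μ -
        a * b * lam ^ (-s) * ∫ x in Ω, H x / ‖x - y₀‖ ^ s ∂μ) =o[atTop] fun lam => lam ^ (-s) := by
  have hlim := ((tendsto_setIntegral_bubbleProfile_mul hs hΩ hk hHm hH).sub_const
    (∫ x in Ω, H x / ‖x - y₀‖ ^ s ∂μ)).const_mul (a * b) |>.add
    ((tendsto_rpow_mul_setIntegral_bubbleProfile_mul hs hΩ hk ht hθ).const_mul a)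
  rw [sub_self, mul_zero, mul_zero, add_zero] at hlim
  refine isLittleO_of_tendsto' ?_ (hlim.congr' ?_)
  all_goals filter_upwards [eventually_gt_atTop 0] with lam hlam
  · exact fun h => absurd h (rpow_pos_of_pos hlam _).ne'
  · have hR : ∀ x ∈ Ω, ‖θ lam x - b * lam ^ (-(s / 2)) * H x‖ ≤ M * lam ^ (-t) := hθ lam hlam
    rw [setIntegral_bubble_mul_eq hlam a b (integrableOn_bubbleProfile_mul hs hΩ hk hHm hH lam)
      (integrableOn_bubbleProfile_mul hs hΩ hk
        ((hθm lam hlam).sub (hHm.const_mul _)) hR lam),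
      eq_div_iff (rpow_pos_of_pos hlam _).ne']
    ring

end

theorem stmt_4_general (n : ℕ) (hn : 5 ≤ n) (Ω : Set (EuclideanSpace ℝ (Fin n)))
    (hΩo : IsOpen Ω) (hΩb : Bornology.IsBounded Ω)
    (y₀ : EuclideanSpace ℝ (Fin n))
    (H : EuclideanSpace ℝ (Fin n) → ℝ) (hH : ContinuousOn H (closure Ω))
    (θ : ℝ → EuclideanSpace ℝ (Fin n) → ℝ)
    (hθmeas : ∀ lam : ℝ, 0 < lam → AEStronglyMeasurable (θ lam) (volume.restrict Ω))
    (M : ℝ)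
    (hθ : ∀ lam : ℝ, 0 < lam → ∀ x ∈ Ω,
      |θ lam x - ((n : ℝ) * ((n : ℝ) - 2)) ^ (((n : ℝ) - 2) / 4) *
          lam ^ (-(((n : ℝ) - 2) / 2)) * H x| ≤ M * lam ^ (-(((n : ℝ) + 2) / 2))) :
    (fun lam : ℝ =>
        (∫ x in Ω, (((n : ℝ) * ((n : ℝ) - 2)) ^ (((n : ℝ) - 2) / 4) *
            (lam / (1 + lam ^ 2 * ‖x - y₀‖ ^ 2)) ^ (((n : ℝ) - 2) / 2)) * θ lam x) -
          ((n : ℝ) * ((n : ℝ) - 2)) ^ (((n : ℝ) - 2) / 2) * lam ^ (-((n : ℝ) - 2)) *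
            ∫ x in Ω, H x / ‖x - y₀‖ ^ ((n : ℝ) - 2))
      =o[atTop] fun lam : ℝ => lam ^ (-((n : ℝ) - 2)) := by
  have hn' : (5 : ℝ) ≤ n := by exact_mod_cast hn
  have : NeZero n := ⟨by omega⟩
  obtain ⟨B, hB⟩ := hΩb.isCompact_closure.exists_bound_of_continuousOn hH
  have hk := integrableOn_inv_norm_sub_rpow_of_isBounded volume (by simp; omega)
    (s := n - 2) (by simp) y₀ hΩb
  have hc : ((n : ℝ) * (n - 2)) ^ (((n : ℝ) - 2) / 4) * ((n : ℝ) * (n - 2)) ^ (((n : ℝ) - 2) / 4) =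
      ((n : ℝ) * (n - 2)) ^ (((n : ℝ) - 2) / 2) := by
    rw [← rpow_add (by nlinarith)]; ring_nf
  have := isLittleO_setIntegral_bubble_mul_sub (by linarith) hΩo.measurableSet hk
    ((hH.mono subset_closure).aestronglyMeasurable hΩo.measurableSet)
    (fun x hx => hB x (subset_closure hx)) hθmeas (((n : ℝ) * (n - 2)) ^ (((n : ℝ) - 2) / 4)) _ M
    (by linarith) hθ
  rwa [hc] at this

/-- Let `n ≥ 5`, `Ω ⊂ ℝⁿ` bounded open, `y₀ ∈ Ω`, `H` continuous on `closure Ω`.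
If for each `λ > 0` a measurable function `θ_λ` on `Ω` satisfies
`θ_λ(x) = cₙ^{(n-2)/4} λ^{-(n-2)/2} H(x) + R_λ(x)` with `|R_λ(x)| ≤ M λ^{-(n+2)/2}` uniformly,
then `∫_Ω δ_{y₀,λ} θ_λ = cₙ^{(n-2)/2} λ^{-(n-2)} ∫_Ω H(x)|x-y₀|^{-(n-2)} dx + o(λ^{-(n-2)})`
as `λ → +∞`. -/
theorem stmt_4 (n : ℕ) (hn : 5 ≤ n) (Ω : Set (EuclideanSpace ℝ (Fin n)))
    (hΩo : IsOpen Ω) (hΩb : Bornology.IsBounded Ω)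
    (y₀ : EuclideanSpace ℝ (Fin n)) (hy₀ : y₀ ∈ Ω)
    (H : EuclideanSpace ℝ (Fin n) → ℝ) (hH : ContinuousOn H (closure Ω))
    (θ : ℝ → EuclideanSpace ℝ (Fin n) → ℝ)
    (hθmeas : ∀ lam : ℝ, 0 < lam → AEStronglyMeasurable (θ lam) (volume.restrict Ω))
    (M : ℝ)
    (hθ : ∀ lam : ℝ, 0 < lam → ∀ x ∈ Ω,
      |θ lam x - ((n : ℝ) * ((n : ℝ) - 2)) ^ (((n : ℝ) - 2) / 4) *
          lam ^ (-(((n : ℝ) - 2) / 2)) * H x| ≤ M * lam ^ (-(((n : ℝ) + 2) / 2))) :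
    (fun lam : ℝ =>
        (∫ x in Ω, (((n : ℝ) * ((n : ℝ) - 2)) ^ (((n : ℝ) - 2) / 4) *
            (lam / (1 + lam ^ 2 * ‖x - y₀‖ ^ 2)) ^ (((n : ℝ) - 2) / 2)) * θ lam x) -
          ((n : ℝ) * ((n : ℝ) - 2)) ^ (((n : ℝ) - 2) / 2) * lam ^ (-((n : ℝ) - 2)) *
            ∫ x in Ω, H x / ‖x - y₀‖ ^ ((n : ℝ) - 2))
      =o[atTop] fun lam : ℝ => lam ^ (-((n : ℝ) - 2)) :=
  stmt_4_general n hn Ω hΩo hΩb y₀ H hH θ hθmeas M hθ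
end

section
/- Let n ≥ 4 be an integer, μ ∈ ℝ, f ∈ C¹([0,1]), and let u ∈ C²([0,1]) be positive on [0,1) and satisfy −u''(t) − ((n−1)/t) u'(t) = f(t) u(t)^{(n+2)/(n-2)} + μ u(t) for t ∈ (0,1), with u'(0) = 0 and u(1) = 0. Then for every ψ ∈ C³([0,1]) with ψ(0) = 0 the following Pohozaev-type identity holds: −(1/2)|u'(1)|² ψ(1) + ∫₀¹ u(t)² [ μ ψ'(t) + (1/4)ψ'''(t) + ((n−1)(n−3)/(4t³)) ( ψ(t) − t ψ'(t) ) ] t^{n-1} dt = ∫₀¹ u(t)^{2n/(n-2)} [ −((n−2)/(2n)) t f'(t) ψ(t) + ((n−1)/n) f(t) ( ψ(t) − t ψ'(t) ) ] t^{n-2} dt. -/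
/-!
Multiply the equation by `t ^ (n - 1) (ψ u' - (ψ' - (n - 1) ψ / t) u / 2)`. Up to the difference
of the two integrands this is the exact derivative of an explicit expression `pohozaevFlux` in
`u, u', ψ, ψ', ψ''`; it is the criticality of the exponent that turns
`f u ^ ((n + 2) / (n - 2)) u'` into a derivative of `u ^ (2n / (n - 2))`. Integrating over
`[0, 1]`, the flux vanishes at `0` because, for `n ≥ 4`, each of its terms carries a positive
power of `t`, and at `1` it reduces to `ψ(1) u'(1)² / 2` because `u(1) = 0`.
-/

open MeasureTheory Set Topology intervalIntegral

theorem add_two_div_sub_two_add_one {x : ℝ} (hx : x ≠ 2) :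
    (x + 2) / (x - 2) + 1 = 2 * x / (x - 2) := by
  have : x - 2 ≠ 0 := sub_ne_zero.mpr hx
  field_simp
  ring

theorem two_mul_div_sub_two_nonneg {n : ℕ} (hn : 2 ≤ n) :
    0 ≤ 2 * (n : ℝ) / ((n : ℝ) - 2) := by
  have : (2 : ℝ) ≤ n := by exact_mod_cast hn
  exact div_nonneg (by linarith) (by linarith)

theorem two_mul_div_sub_two_pos {n : ℕ} (hn : 3 ≤ n) : 0 < 2 * (n : ℝ) / ((n : ℝ) - 2) := by
  have : (3 : ℝ) ≤ n := by exact_mod_cast hn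
  exact div_pos (by linarith) (by linarith)

noncomputable section

def pohozaevFlux (n : ℕ) (μ : ℝ) (f u u' ψ ψ' ψ'' : ℝ → ℝ) (t : ℝ) : ℝ :=
  (ψ t * u' t ^ 2 / 2 - ψ' t * u t * u' t / 2 + ψ'' t * u t ^ 2 / 4 + μ * ψ t * u t ^ 2 / 2
      + ((n : ℝ) - 2) / (2 * n) * f t * ψ t * u t ^ (2 * (n : ℝ) / ((n : ℝ) - 2)))
      * t ^ (n - 1)
    + ((n : ℝ) - 1) / 4 * (2 * ψ t * u t * u' t - ψ' t * u t ^ 2) * t ^ (n - 2)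
    + ((n : ℝ) - 1) / 4 * ψ t * u t ^ 2 * t ^ (n - 3)

def pohozaevIntegrandLeft (n : ℕ) (μ : ℝ) (u ψ ψ' ψ''' : ℝ → ℝ) (t : ℝ) : ℝ :=
  (u t) ^ 2 *
    (μ * ψ' t + (1 / 4) * ψ''' t +
      ((n : ℝ) - 1) * ((n : ℝ) - 3) / (4 * t ^ 3) * (ψ t - t * ψ' t)) * t ^ (n - 1)

def pohozaevIntegrandRight (n : ℕ) (f f' u ψ ψ' : ℝ → ℝ) (t : ℝ) : ℝ :=
  u t ^ (2 * (n : ℝ) / ((n : ℝ) - 2)) *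
    (-(((n : ℝ) - 2) / (2 * (n : ℝ))) * t * f' t * ψ t +
      ((n : ℝ) - 1) / (n : ℝ) * f t * (ψ t - t * ψ' t)) * t ^ (n - 2)

end

section

variable {n : ℕ} {μ : ℝ} {f f' u u' u'' ψ ψ' ψ'' ψ''' : ℝ → ℝ}

theorem hasDerivAt_pohozaevFlux (hn : 4 ≤ n) {t : ℝ} (ht : 0 < t) (hut : 0 < u t)
    (hf : HasDerivAt f (f' t) t) (hu : HasDerivAt u (u' t) t) (hu' : HasDerivAt u' (u'' t) t)
    (hψ : HasDerivAt ψ (ψ' t) t) (hψ' : HasDerivAt ψ' (ψ'' t) t)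
    (hψ'' : HasDerivAt ψ'' (ψ''' t) t) :
    HasDerivAt (pohozaevFlux n μ f u u' ψ ψ' ψ'')
      (pohozaevIntegrandLeft n μ u ψ ψ' ψ''' t - pohozaevIntegrandRight n f f' u ψ ψ' t +
        t ^ (n - 1) * (ψ t * u' t - (ψ' t - ((n : ℝ) - 1) * ψ t / t) * u t / 2) *
          (u'' t + ((n : ℝ) - 1) / t * u' t + f t * u t ^ (((n : ℝ) + 2) / ((n : ℝ) - 2))
            + μ * u t)) t := by
  have hpq := add_two_div_sub_two_add_one (x := n) (by norm_cast; omega)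
  have hcrit : u t ^ (2 * (n : ℝ) / ((n : ℝ) - 2)) =
      u t ^ (((n : ℝ) + 2) / ((n : ℝ) - 2)) * u t := by
    rw [← hpq, Real.rpow_add_one hut.ne']
  have hq : HasDerivAt (fun s => u s ^ (2 * (n : ℝ) / ((n : ℝ) - 2)))
      (u' t * (2 * (n : ℝ) / ((n : ℝ) - 2)) * u t ^ (((n : ℝ) + 2) / ((n : ℝ) - 2))) t := by
    simpa only [← hpq, add_sub_cancel_right] using hu.rpow_const (p := _ + 1) (Or.inl hut.ne')
  have hA := (((((hψ.mul (hu'.pow 2)).div_const 2).sub (((hψ'.mul hu).mul hu').div_const 2)).add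
    ((hψ''.mul (hu.pow 2)).div_const 4)).add (((hψ.const_mul μ).mul (hu.pow 2)).div_const 2)).add
    (((hf.const_mul (((n : ℝ) - 2) / (2 * n))).mul hψ).mul hq)
  have hB := (((hψ.const_mul 2).mul hu).mul hu').sub (hψ'.mul (hu.pow 2)) |>.const_mul
    (((n : ℝ) - 1) / 4)
  have hC := (hψ.const_mul (((n : ℝ) - 1) / 4)).mul (hu.pow 2)
  refine (((hA.mul (hasDerivAt_pow (n - 1) t)).add (hB.mul (hasDerivAt_pow (n - 2) t))).add
    (hC.mul (hasDerivAt_pow (n - 3) t))).congr_deriv ?_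
  obtain ⟨k, rfl⟩ : ∃ k, n = k + 4 := ⟨n - 4, by omega⟩
  have hk : (k : ℝ) + 4 - 2 ≠ 0 := by linarith [(k.cast_nonneg : (0 : ℝ) ≤ k)]
  simp only [pohozaevIntegrandLeft, pohozaevIntegrandRight, show k + 4 - 1 = k + 3 from rfl,
    show k + 4 - 2 = k + 2 from rfl, show k + 4 - 3 = k + 1 from rfl,
    show k + 3 - 1 = k + 2 from rfl, show k + 2 - 1 = k + 1 from rfl, show k + 1 - 1 = k from rfl,
    Pi.add_apply, Pi.sub_apply, Pi.mul_apply, Pi.pow_apply]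
  rw [hcrit]
  push_cast
  field_simp
  ring

theorem hasDerivAt_pohozaevFlux_of_ode (hn : 4 ≤ n) {t : ℝ} (ht : 0 < t) (hut : 0 < u t)
    (hode : -u'' t - ((n : ℝ) - 1) / t * u' t =
      f t * u t ^ (((n : ℝ) + 2) / ((n : ℝ) - 2)) + μ * u t)
    (hf : HasDerivAt f (f' t) t) (hu : HasDerivAt u (u' t) t) (hu' : HasDerivAt u' (u'' t) t)
    (hψ : HasDerivAt ψ (ψ' t) t) (hψ' : HasDerivAt ψ' (ψ'' t) t)
    (hψ'' : HasDerivAt ψ'' (ψ''' t) t) :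
    HasDerivAt (pohozaevFlux n μ f u u' ψ ψ' ψ'')
      (pohozaevIntegrandLeft n μ u ψ ψ' ψ''' t - pohozaevIntegrandRight n f f' u ψ ψ' t)
      t := by
  have hresidual : u'' t + ((n : ℝ) - 1) / t * u' t +
      f t * u t ^ (((n : ℝ) + 2) / ((n : ℝ) - 2)) + μ * u t = 0 := by
    linarith
  refine (hasDerivAt_pohozaevFlux hn ht hut hf hu hu' hψ hψ' hψ'').congr_deriv ?_
  rw [hresidual, mul_zero, add_zero]

theorem pohozaevFlux_zero (hn : 4 ≤ n) : pohozaevFlux n μ f u u' ψ ψ' ψ'' 0 = 0 := by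
  obtain ⟨k, rfl⟩ : ∃ k, n = k + 4 := ⟨n - 4, by omega⟩
  simp [pohozaevFlux, show k + 4 - 1 = k + 3 from rfl, show k + 4 - 2 = k + 2 from rfl,
    show k + 4 - 3 = k + 1 from rfl]

theorem pohozaevFlux_one (hn : 3 ≤ n) (hu1 : u 1 = 0) :
    pohozaevFlux n μ f u u' ψ ψ' ψ'' 1 = ψ 1 * u' 1 ^ 2 / 2 := by
  simp [pohozaevFlux, hu1, Real.zero_rpow (two_mul_div_sub_two_pos hn).ne']

theorem continuousOn_pohozaevFlux {s : Set ℝ} (hn : 2 ≤ n) (hf : ContinuousOn f s)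
    (hu : ContinuousOn u s) (hu' : ContinuousOn u' s) (hψ : ContinuousOn ψ s)
    (hψ' : ContinuousOn ψ' s) (hψ'' : ContinuousOn ψ'' s) :
    ContinuousOn (pohozaevFlux n μ f u u' ψ ψ' ψ'') s := by
  have hup : ContinuousOn (fun t => u t ^ (2 * (n : ℝ) / ((n : ℝ) - 2))) s :=
    hu.rpow_const fun _ _ => Or.inr (two_mul_div_sub_two_nonneg hn)
  unfold pohozaevFlux
  fun_prop

theorem intervalIntegrable_pohozaevIntegrandLeft {b : ℝ} (hn : 4 ≤ n)
    (hu : ContinuousOn u (uIcc 0 b)) (hψ : ContinuousOn ψ (uIcc 0 b))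
    (hψ' : ContinuousOn ψ' (uIcc 0 b)) (hψ''' : ContinuousOn ψ''' (uIcc 0 b)) :
    IntervalIntegrable (pohozaevIntegrandLeft n μ u ψ ψ' ψ''') volume 0 b := by
  obtain ⟨k, rfl⟩ : ∃ k, n = k + 4 := ⟨n - 4, by omega⟩
  -- away from `t = 0` the singular factor `t ^ (n - 1) / t ^ 3` is the polynomial `t ^ (n - 4)`
  have hcont : ContinuousOn (fun t => u t ^ 2 * (μ * ψ' t + 1 / 4 * ψ''' t) * t ^ (k + 3) +
      ((k : ℝ) + 3) * ((k : ℝ) + 1) / 4 * u t ^ 2 * (ψ t - t * ψ' t) * t ^ k) (uIcc 0 b) := by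
    fun_prop
  refine hcont.intervalIntegrable.congr_uIoo fun t ht => ?_
  have ht0 : t ≠ 0 := by
    rcases le_total 0 b with hb | hb
    · rw [uIoo_of_le hb] at ht; exact ht.1.ne'
    · rw [uIoo_of_ge hb] at ht; exact ht.2.ne
  simp only [pohozaevIntegrandLeft, show k + 4 - 1 = k + 3 from rfl]
  push_cast
  field_simp
  ring

theorem intervalIntegrable_pohozaevIntegrandRight {a b : ℝ} (hn : 2 ≤ n)
    (hf : ContinuousOn f (uIcc a b)) (hf' : ContinuousOn f' (uIcc a b))
    (hu : ContinuousOn u (uIcc a b)) (hψ : ContinuousOn ψ (uIcc a b))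
    (hψ' : ContinuousOn ψ' (uIcc a b)) :
    IntervalIntegrable (pohozaevIntegrandRight n f f' u ψ ψ') volume a b := by
  have hup : ContinuousOn (fun t => u t ^ (2 * (n : ℝ) / ((n : ℝ) - 2))) (uIcc a b) :=
    hu.rpow_const fun _ _ => Or.inr (two_mul_div_sub_two_nonneg hn)
  refine ContinuousOn.intervalIntegrable ?_
  unfold pohozaevIntegrandRight
  fun_prop

end

theorem stmt_9_general (n : ℕ) (hn : 4 ≤ n) (μ : ℝ)
    (f f' : ℝ → ℝ)
    (hf : ∀ t ∈ Icc (0 : ℝ) 1, HasDerivWithinAt f (f' t) (Icc (0 : ℝ) 1) t)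
    (hf' : ContinuousOn f' (Icc (0 : ℝ) 1))
    (u u' u'' : ℝ → ℝ)
    (hu : ∀ t ∈ Icc (0 : ℝ) 1, HasDerivWithinAt u (u' t) (Icc (0 : ℝ) 1) t)
    (hu' : ∀ t ∈ Icc (0 : ℝ) 1, HasDerivWithinAt u' (u'' t) (Icc (0 : ℝ) 1) t)
    (hupos : ∀ t ∈ Ico (0 : ℝ) 1, 0 < u t)
    (hode : ∀ t ∈ Ioo (0 : ℝ) 1,
      -u'' t - ((n : ℝ) - 1) / t * u' t =
        f t * u t ^ (((n : ℝ) + 2) / ((n : ℝ) - 2)) + μ * u t)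
    (hu1 : u 1 = 0)
    (ψ ψ' ψ'' ψ''' : ℝ → ℝ)
    (hψ : ∀ t ∈ Icc (0 : ℝ) 1, HasDerivWithinAt ψ (ψ' t) (Icc (0 : ℝ) 1) t)
    (hψ' : ∀ t ∈ Icc (0 : ℝ) 1, HasDerivWithinAt ψ' (ψ'' t) (Icc (0 : ℝ) 1) t)
    (hψ'' : ∀ t ∈ Icc (0 : ℝ) 1, HasDerivWithinAt ψ'' (ψ''' t) (Icc (0 : ℝ) 1) t)
    (hψ''' : ContinuousOn ψ''' (Icc (0 : ℝ) 1)) :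
    -(1 / 2) * (u' 1) ^ 2 * ψ 1 +
        (∫ t in (0 : ℝ)..1,
          (u t) ^ 2 *
            (μ * ψ' t + (1 / 4) * ψ''' t +
              ((n : ℝ) - 1) * ((n : ℝ) - 3) / (4 * t ^ 3) * (ψ t - t * ψ' t)) * t ^ (n - 1)) =
      ∫ t in (0 : ℝ)..1,
        u t ^ (2 * (n : ℝ) / ((n : ℝ) - 2)) *
          (-(((n : ℝ) - 2) / (2 * (n : ℝ))) * t * f' t * ψ t +
            ((n : ℝ) - 1) / (n : ℝ) * f t * (ψ t - t * ψ' t)) * t ^ (n - 2) := by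
  have hI : uIcc (0 : ℝ) 1 = Icc 0 1 := uIcc_of_le zero_le_one
  have hcont {g g' : ℝ → ℝ}
      (h : ∀ t ∈ Icc (0 : ℝ) 1, HasDerivWithinAt g (g' t) (Icc 0 1) t) :
      ContinuousOn g (uIcc 0 1) :=
    hI ▸ HasDerivWithinAt.continuousOn h
  have hderiv {g g' : ℝ → ℝ}
      (h : ∀ t ∈ Icc (0 : ℝ) 1, HasDerivWithinAt g (g' t) (Icc 0 1) t) {t : ℝ}
      (ht : t ∈ Ioo (0 : ℝ) 1) : HasDerivAt g (g' t) t :=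
    (h t (Ioo_subset_Icc_self ht)).hasDerivAt (Icc_mem_nhds ht.1 ht.2)
  have hL : IntervalIntegrable (pohozaevIntegrandLeft n μ u ψ ψ' ψ''') volume 0 1 :=
    intervalIntegrable_pohozaevIntegrandLeft hn (hcont hu) (hcont hψ) (hcont hψ') (hI ▸ hψ''')
  have hR : IntervalIntegrable (pohozaevIntegrandRight n f f' u ψ ψ') volume 0 1 :=
    intervalIntegrable_pohozaevIntegrandRight (by omega) (hcont hf) (hI ▸ hf') (hcont hu)
      (hcont hψ) (hcont hψ')
  have hFTC := integral_eq_sub_of_hasDerivAt_of_le zero_le_one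
    (hI ▸ continuousOn_pohozaevFlux (μ := μ) (by omega) (hcont hf) (hcont hu) (hcont hu')
      (hcont hψ) (hcont hψ') (hcont hψ''))
    (fun t ht => hasDerivAt_pohozaevFlux_of_ode hn ht.1 (hupos t (Ioo_subset_Ico_self ht))
      (hode t ht) (hderiv hf ht) (hderiv hu ht) (hderiv hu' ht) (hderiv hψ ht) (hderiv hψ' ht)
      (hderiv hψ'' ht)) (hL.sub hR)
  rw [integral_sub hL hR, pohozaevFlux_one (by omega) hu1, pohozaevFlux_zero hn] at hFTC
  change _ + ∫ t in (0 : ℝ)..1, pohozaevIntegrandLeft n μ u ψ ψ' ψ''' t =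
    ∫ t in (0 : ℝ)..1, pohozaevIntegrandRight n f f' u ψ ψ' t
  linarith

/-- Let `n ≥ 4`, `μ ∈ ℝ`, `f ∈ C¹([0,1])` and let `u ∈ C²([0,1])` be positive
on `[0,1)` and solve `−u'' − ((n−1)/t)u' = f(t)u^{(n+2)/(n-2)} + μu` on `(0,1)` with
`u'(0) = 0`, `u(1) = 0`. Then for every `ψ ∈ C³([0,1])` with `ψ(0) = 0` the Pohozaev-type
identity holds:
`−(1/2)|u'(1)|²ψ(1) + ∫₀¹ u²[μψ' + (1/4)ψ''' + ((n−1)(n−3)/(4t³))(ψ − tψ')] t^{n-1} dt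
  = ∫₀¹ u^{2n/(n-2)} [−((n−2)/(2n)) t f' ψ + ((n−1)/n) f (ψ − tψ')] t^{n-2} dt`. -/
theorem stmt_9 (n : ℕ) (hn : 4 ≤ n) (μ : ℝ)
    (f f' : ℝ → ℝ)
    (hf : ∀ t ∈ Icc (0 : ℝ) 1, HasDerivWithinAt f (f' t) (Icc (0 : ℝ) 1) t)
    (hf' : ContinuousOn f' (Icc (0 : ℝ) 1))
    (u u' u'' : ℝ → ℝ)
    (hu : ∀ t ∈ Icc (0 : ℝ) 1, HasDerivWithinAt u (u' t) (Icc (0 : ℝ) 1) t)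
    (hu' : ∀ t ∈ Icc (0 : ℝ) 1, HasDerivWithinAt u' (u'' t) (Icc (0 : ℝ) 1) t)
    (hu'' : ContinuousOn u'' (Icc (0 : ℝ) 1))
    (hupos : ∀ t ∈ Ico (0 : ℝ) 1, 0 < u t)
    (hode : ∀ t ∈ Ioo (0 : ℝ) 1,
      -u'' t - ((n : ℝ) - 1) / t * u' t =
        f t * u t ^ (((n : ℝ) + 2) / ((n : ℝ) - 2)) + μ * u t)
    (hu'0 : u' 0 = 0) (hu1 : u 1 = 0)
    (ψ ψ' ψ'' ψ''' : ℝ → ℝ)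
    (hψ : ∀ t ∈ Icc (0 : ℝ) 1, HasDerivWithinAt ψ (ψ' t) (Icc (0 : ℝ) 1) t)
    (hψ' : ∀ t ∈ Icc (0 : ℝ) 1, HasDerivWithinAt ψ' (ψ'' t) (Icc (0 : ℝ) 1) t)
    (hψ'' : ∀ t ∈ Icc (0 : ℝ) 1, HasDerivWithinAt ψ'' (ψ''' t) (Icc (0 : ℝ) 1) t)
    (hψ''' : ContinuousOn ψ''' (Icc (0 : ℝ) 1))
    (hψ0 : ψ 0 = 0) :
    -(1 / 2) * (u' 1) ^ 2 * ψ 1 +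
        (∫ t in (0 : ℝ)..1,
          (u t) ^ 2 *
            (μ * ψ' t + (1 / 4) * ψ''' t +
              ((n : ℝ) - 1) * ((n : ℝ) - 3) / (4 * t ^ 3) * (ψ t - t * ψ' t)) * t ^ (n - 1)) =
      ∫ t in (0 : ℝ)..1,
        u t ^ (2 * (n : ℝ) / ((n : ℝ) - 2)) *
          (-(((n : ℝ) - 2) / (2 * (n : ℝ))) * t * f' t * ψ t +
            ((n : ℝ) - 1) / (n : ℝ) * f t * (ψ t - t * ψ' t)) * t ^ (n - 2) :=
  stmt_9_general n hn μ f f' hf hf' u u' u'' hu hu' hupos hode hu1 ψ ψ' ψ'' ψ''' hψ hψ' hψ'' hψ'''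
end

section
/- Let n ≥ 5 be an odd integer and μ > 0. Fix a₁ ∈ ℝ and define coefficients recursively by a_{2p+1} = −(2(2p−1)μ / ( p[ (2p+1)(2p−1) − (n−1)(n−3) ] )) a_{2p−1} for all p ≥ 1 (the denominators never vanish because n is odd). Then the power series ψ₁(t) = Σ_{p≥0} a_{2p+1} t^{2p+1} converges for every t ∈ ℝ, ψ₁ is smooth on [0,1], and ψ₁ satisfies the ordinary differential equation μ ψ'(t) + (1/4)ψ'''(t) + ((n−1)(n−3)/(4t³)) ( ψ(t) − t ψ'(t) ) = 0 for all t ∈ (0,1]. -/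
open Set

/-- The coefficients `a_{2p+1}` (indexed by `p`) of the odd power-series solution `ψ₁` of the
ODE `μψ' + (1/4)ψ''' + ((n−1)(n−3)/(4t³))(ψ − tψ') = 0`, defined by `a₁` given and
`a_{2p+1} = −(2(2p−1)μ / (p[(2p+1)(2p−1) − (n−1)(n−3)])) a_{2p−1}` for `p ≥ 1`. -/
noncomputable def oddCoeff (n : ℕ) (μ a₁ : ℝ) : ℕ → ℝ
  | 0 => a₁
  | p + 1 =>
    -(2 * (2 * ((p : ℝ) + 1) - 1) * μ /
        (((p : ℝ) + 1) *
          ((2 * ((p : ℝ) + 1) + 1) * (2 * ((p : ℝ) + 1) - 1) - ((n : ℝ) - 1) * ((n : ℝ) - 3)))) *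
      oddCoeff n μ a₁ p

/-- `ψ₁(t) = Σ_{p≥0} a_{2p+1} t^{2p+1}`. -/
noncomputable def psiOne (n : ℕ) (μ a₁ : ℝ) (t : ℝ) : ℝ :=
  ∑' p : ℕ, oddCoeff n μ a₁ p * t ^ (2 * p + 1)

private lemma aux_cast (n p : ℕ) :
    (2 * ((p : ℝ) + 1) + 1) * (2 * ((p : ℝ) + 1) - 1) - ((n : ℝ) - 1) * ((n : ℝ) - 3)
      = ((4 * ((p : ℤ) + 1) ^ 2 - ((n : ℤ) - 2) ^ 2 : ℤ) : ℝ) := by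
  push_cast; ring

private lemma aux_odd (n : ℕ) (hodd : Odd n) (p : ℕ) :
    Odd (4 * ((p : ℤ) + 1) ^ 2 - ((n : ℤ) - 2) ^ 2) := by
  obtain ⟨k, hk⟩ := hodd
  have hk' : (n : ℤ) = 2 * (k : ℤ) + 1 := by exact_mod_cast hk
  exact ⟨2 * ((p : ℤ) + 1) ^ 2 - 2 * (k : ℤ) ^ 2 + 2 * k - 1, by rw [hk']; ring⟩

private lemma aux_ne (n : ℕ) (hodd : Odd n) (p : ℕ) :
    (2 * ((p : ℝ) + 1) + 1) * (2 * ((p : ℝ) + 1) - 1) - ((n : ℝ) - 1) * ((n : ℝ) - 3) ≠ 0 := by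
  obtain ⟨j, hj⟩ := aux_odd n hodd p
  rw [aux_cast, hj]
  exact_mod_cast (by omega : (2 * j + 1 : ℤ) ≠ 0)

private lemma aux_bound (n : ℕ) (hn : 5 ≤ n) (hodd : Odd n) (p : ℕ) :
    2 * (p : ℝ) + 1 ≤ ((n : ℝ) - 2) *
      |(2 * ((p : ℝ) + 1) + 1) * (2 * ((p : ℝ) + 1) - 1) - ((n : ℝ) - 1) * ((n : ℝ) - 3)| := by
  rw [aux_cast]
  have key : 2 * (p : ℤ) + 1 ≤ ((n : ℤ) - 2) * |4 * ((p : ℤ) + 1) ^ 2 - ((n : ℤ) - 2) ^ 2| := by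
    obtain ⟨j, hj⟩ := aux_odd n hodd p
    set m : ℤ := (n : ℤ) - 2 with hm
    set D : ℤ := 4 * ((p : ℤ) + 1) ^ 2 - m ^ 2 with hDdef
    have hm3 : 3 ≤ m := by
      have : (5 : ℤ) ≤ (n : ℤ) := by exact_mod_cast hn
      omega
    have hD1 : 1 ≤ |D| := Int.one_le_abs (by omega)
    rcases lt_trichotomy m (2 * (p : ℤ) + 2) with h | h | h
    · have h1 : m ≤ 2 * (p : ℤ) + 1 := by omega
      have h2 : 4 * (p : ℤ) + 3 ≤ D := by
        rw [hDdef]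
        nlinarith [mul_nonneg (by omega : (0:ℤ) ≤ 2*(p:ℤ)+1-m) (by omega : (0:ℤ) ≤ 2*(p:ℤ)+1+m)]
      rw [abs_of_pos (by omega)]
      have h3 : 1 * (2 * (p : ℤ) + 1) ≤ m * D :=
        mul_le_mul (by omega) (by omega) (by omega) (by omega)
      linarith
    · exfalso
      have hD0 : D = 0 := by rw [hDdef, h]; ring
      rw [hD0] at hD1
      simp at hD1
    · have h3 : m ≤ m * |D| := le_mul_of_one_le_right (by omega) hD1
      linarith
  calc 2 * (p : ℝ) + 1 = ((2 * (p : ℤ) + 1 : ℤ) : ℝ) := by push_cast; ring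
    _ ≤ ((((n : ℤ) - 2) * |4 * ((p : ℤ) + 1) ^ 2 - ((n : ℤ) - 2) ^ 2| : ℤ) : ℝ) := by
        exact_mod_cast key
    _ = ((n : ℝ) - 2) * |((4 * ((p : ℤ) + 1) ^ 2 - ((n : ℤ) - 2) ^ 2 : ℤ) : ℝ)| := by
        push_cast [Int.cast_abs]; ring

private lemma coeff_bound (n : ℕ) (hn : 5 ≤ n) (hodd : Odd n) (μ a₁ : ℝ) (hμ : 0 < μ) :
    ∀ p : ℕ, |oddCoeff n μ a₁ p| ≤ |a₁| * (2 * ((n : ℝ) - 2) * μ) ^ p / (p.factorial : ℝ) := by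
  have hn2 : (3 : ℝ) ≤ (n : ℝ) - 2 := by
    have : (5 : ℝ) ≤ (n : ℝ) := by exact_mod_cast hn
    linarith
  intro p
  induction p with
  | zero => simp [oddCoeff]
  | succ p ih =>
    have hD := aux_ne n hodd p
    have hb := aux_bound n hn hodd p
    set D : ℝ := (2 * ((p : ℝ) + 1) + 1) * (2 * ((p : ℝ) + 1) - 1) - ((n : ℝ) - 1) * ((n : ℝ) - 3)
      with hDdef
    have hp0 : (0 : ℝ) < (p : ℝ) + 1 := by positivity
    rw [oddCoeff, abs_mul]
    have key : |(-(2 * (2 * ((p : ℝ) + 1) - 1) * μ / (((p : ℝ) + 1) * D)))|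
        ≤ (2 * ((n : ℝ) - 2) * μ) / ((p : ℝ) + 1) := by
      rw [abs_neg, abs_div, abs_mul ((p : ℝ) + 1) D, abs_of_pos hp0]
      have hnum : |2 * (2 * ((p : ℝ) + 1) - 1) * μ| = 2 * (2 * (p : ℝ) + 1) * μ := by
        rw [abs_of_nonneg (by nlinarith [Nat.cast_nonneg (α := ℝ) p])]
        ring
      rw [hnum]
      have hDpos : 0 < |D| := abs_pos.mpr hD
      rw [div_le_div_iff₀ (by positivity) hp0]
      nlinarith [mul_le_mul_of_nonneg_left hb (by positivity : (0:ℝ) ≤ 2 * μ * ((p : ℝ) + 1))]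
    calc |(-(2 * (2 * ((p : ℝ) + 1) - 1) * μ / (((p : ℝ) + 1) * D)))| * |oddCoeff n μ a₁ p|
        ≤ ((2 * ((n : ℝ) - 2) * μ) / ((p : ℝ) + 1)) *
            (|a₁| * (2 * ((n : ℝ) - 2) * μ) ^ p / (p.factorial : ℝ)) := by
          apply mul_le_mul key ih (abs_nonneg _) (by positivity)
      _ = |a₁| * (2 * ((n : ℝ) - 2) * μ) ^ (p + 1) / ((p + 1).factorial : ℝ) := by
          rw [Nat.factorial_succ, pow_succ]
          push_cast
          field_simp

private lemma nat_pow_aux (p : ℕ) : 2 * p + 3 ≤ 2 ^ (p + 2) := by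
  induction p with
  | zero => norm_num
  | succ p ih => rw [pow_succ]; omega

private lemma summable_aux (n : ℕ) (hn : 5 ≤ n) (hodd : Odd n) (μ a₁ : ℝ) (hμ : 0 < μ)
    (r : ℝ) (hr : 0 ≤ r) :
    Summable (fun p : ℕ => (2 * (p : ℝ) + 3) ^ 3 * |oddCoeff n μ a₁ p| * r ^ p) := by
  have hn2 : (3 : ℝ) ≤ (n : ℝ) - 2 := by
    have : (5 : ℝ) ≤ (n : ℝ) := by exact_mod_cast hn
    linarith
  set C : ℝ := 2 * ((n : ℝ) - 2) * μ with hC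
  have hC0 : 0 ≤ C := by positivity
  clear_value C
  apply Summable.of_nonneg_of_le (fun p => by positivity) (fun p => ?_)
    ((Real.summable_pow_div_factorial (8 * (C * r))).mul_left (64 * |a₁|))
  have h1 := coeff_bound n hn hodd μ a₁ hμ p
  rw [← hC] at h1
  have h2 : (2 * (p : ℝ) + 3) ≤ (2 : ℝ) ^ (p + 2) := by exact_mod_cast nat_pow_aux p
  have h64 : ((2 : ℝ) ^ (p + 2)) ^ 3 = 64 * 8 ^ p := by
    rw [pow_add, mul_pow, ← pow_mul, mul_comm p 3, pow_mul]
    norm_num [mul_comm]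
  calc (2 * (p : ℝ) + 3) ^ 3 * |oddCoeff n μ a₁ p| * r ^ p
      ≤ ((2 : ℝ) ^ (p + 2)) ^ 3 * (|a₁| * C ^ p / (p.factorial : ℝ)) * r ^ p := by
        gcongr
    _ = 64 * |a₁| * ((8 * (C * r)) ^ p / (p.factorial : ℝ)) := by
        rw [h64, mul_pow, mul_pow]
        ring

private noncomputable def F1 (n : ℕ) (μ a₁ : ℝ) (p : ℕ) (t : ℝ) : ℝ :=
  ((2 * p + 1 : ℕ) : ℝ) * oddCoeff n μ a₁ p * t ^ (2 * p)

private noncomputable def F2 (n : ℕ) (μ a₁ : ℝ) (p : ℕ) (t : ℝ) : ℝ :=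
  ((2 * p + 1 : ℕ) : ℝ) * ((2 * p : ℕ) : ℝ) * oddCoeff n μ a₁ p * t ^ (2 * p - 1)

private noncomputable def F3 (n : ℕ) (μ a₁ : ℝ) (p : ℕ) (t : ℝ) : ℝ :=
  ((2 * p + 1 : ℕ) : ℝ) * ((2 * p : ℕ) : ℝ) * ((2 * p - 1 : ℕ) : ℝ) * oddCoeff n μ a₁ p *
    t ^ (2 * p - 2)

private noncomputable def U (n : ℕ) (μ a₁ : ℝ) (p : ℕ) : ℝ :=
  (2 * (p : ℝ) + 3) ^ 3 * |oddCoeff n μ a₁ p| * ((4 : ℝ) ^ p * 2)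

private lemma sU (n : ℕ) (hn : 5 ≤ n) (hodd : Odd n) (μ a₁ : ℝ) (hμ : 0 < μ) :
    Summable (U n μ a₁) := by
  exact ((summable_aux n hn hodd μ a₁ hμ 4 (by norm_num)).mul_right 2).congr
    fun p => by rw [U]; ring

private lemma sAbs (n : ℕ) (hn : 5 ≤ n) (hodd : Odd n) (μ a₁ : ℝ) (hμ : 0 < μ)
    (r : ℝ) (hr : 0 ≤ r) :
    Summable (fun p : ℕ => |oddCoeff n μ a₁ p| * r ^ (2 * p + 1)) := by
  apply Summable.of_nonneg_of_le (fun p => by positivity) (fun p => ?_)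
    ((summable_aux n hn hodd μ a₁ hμ (r ^ 2) (by positivity)).mul_right r)
  have hx : (1 : ℝ) ≤ 2 * (p : ℝ) + 3 := by
    have := Nat.cast_nonneg (α := ℝ) p; linarith
  have h13 : (1 : ℝ) ≤ (2 * (p : ℝ) + 3) ^ 3 :=
    hx.trans (le_self_pow₀ hx (by norm_num))
  calc |oddCoeff n μ a₁ p| * r ^ (2 * p + 1)
      = 1 * |oddCoeff n μ a₁ p| * (r ^ 2) ^ p * r := by rw [pow_succ, pow_mul]; ring
    _ ≤ (2 * (p : ℝ) + 3) ^ 3 * |oddCoeff n μ a₁ p| * (r ^ 2) ^ p * r := by gcongr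
    _ = (2 * (p : ℝ) + 3) ^ 3 * |oddCoeff n μ a₁ p| * (r ^ 2) ^ p * r := rfl

private lemma S0 (n : ℕ) (hn : 5 ≤ n) (hodd : Odd n) (μ a₁ : ℝ) (hμ : 0 < μ) (t : ℝ) :
    Summable (fun p : ℕ => oddCoeff n μ a₁ p * t ^ (2 * p + 1)) := by
  apply Summable.of_norm_bounded (sAbs n hn hodd μ a₁ hμ |t| (abs_nonneg t))
  intro p
  rw [Real.norm_eq_abs, abs_mul, abs_pow]

private lemma pow_bound {y : ℝ} (hy : |y| ≤ 2) {e p : ℕ} (he : e ≤ 2 * p + 1) :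
    |y| ^ e ≤ (4 : ℝ) ^ p * 2 := by
  calc |y| ^ e ≤ 2 ^ e := pow_le_pow_left₀ (abs_nonneg y) hy e
    _ ≤ 2 ^ (2 * p + 1) := pow_le_pow_right₀ one_le_two he
    _ = (4 : ℝ) ^ p * 2 := by rw [pow_succ, pow_mul]; norm_num

private lemma hb_gen {c y ap : ℝ} {e p : ℕ} (hc0 : 0 ≤ c) (hc : c ≤ (2 * (p : ℝ) + 3) ^ 3)
    (hy : |y| ≤ 2) (he : e ≤ 2 * p + 1) :
    ‖c * ap * y ^ e‖ ≤ (2 * (p : ℝ) + 3) ^ 3 * |ap| * ((4 : ℝ) ^ p * 2) := by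
  rw [Real.norm_eq_abs, abs_mul, abs_mul, abs_of_nonneg hc0, abs_pow]
  calc c * |ap| * |y| ^ e
      ≤ (2 * (p : ℝ) + 3) ^ 3 * |ap| * ((4 : ℝ) ^ p * 2) :=
        mul_le_mul (mul_le_mul hc le_rfl (abs_nonneg _) (by positivity)) (pow_bound hy he)
          (by positivity) (by positivity)

private lemma hb0 (n : ℕ) (μ a₁ : ℝ) (p : ℕ) {y : ℝ} (hy : |y| ≤ 2) :
    ‖oddCoeff n μ a₁ p * y ^ (2 * p + 1)‖ ≤ U n μ a₁ p := by
  have hx : (1 : ℝ) ≤ 2 * (p : ℝ) + 3 := by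
    have := Nat.cast_nonneg (α := ℝ) p; linarith
  have := hb_gen (c := (1 : ℝ)) (ap := oddCoeff n μ a₁ p) (e := 2 * p + 1) (p := p)
    zero_le_one (hx.trans (le_self_pow₀ hx (by norm_num))) hy le_rfl
  simpa [U] using this

private lemma hb1 (n : ℕ) (μ a₁ : ℝ) (p : ℕ) {y : ℝ} (hy : |y| ≤ 2) :
    ‖F1 n μ a₁ p y‖ ≤ U n μ a₁ p := by
  have hc : ((2 * p + 1 : ℕ) : ℝ) ≤ (2 * (p : ℝ) + 3) ^ 3 := by
    have hx : (1 : ℝ) ≤ 2 * (p : ℝ) + 3 := by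
      have := Nat.cast_nonneg (α := ℝ) p; linarith
    push_cast
    linarith [le_self_pow₀ hx (by norm_num : 3 ≠ 0)]
  exact hb_gen (by positivity) hc hy (by omega)

private lemma hb2 (n : ℕ) (μ a₁ : ℝ) (p : ℕ) {y : ℝ} (hy : |y| ≤ 2) :
    ‖F2 n μ a₁ p y‖ ≤ U n μ a₁ p := by
  have hnat : (2 * p + 1) * (2 * p) ≤ (2 * p + 3) ^ 3 := by
    calc (2 * p + 1) * (2 * p) ≤ (2 * p + 3) * ((2 * p + 3) * (2 * p + 3)) := by
          exact Nat.mul_le_mul (by omega) (by nlinarith)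
      _ = (2 * p + 3) ^ 3 := by ring
  have hc : ((2 * p + 1 : ℕ) : ℝ) * ((2 * p : ℕ) : ℝ) ≤ (2 * (p : ℝ) + 3) ^ 3 := by
    have := Nat.cast_le (α := ℝ) |>.2 hnat
    push_cast at this ⊢
    linarith
  exact hb_gen (by positivity) hc hy (by omega)

private lemma hb3 (n : ℕ) (μ a₁ : ℝ) (p : ℕ) {y : ℝ} (hy : |y| ≤ 2) :
    ‖F3 n μ a₁ p y‖ ≤ U n μ a₁ p := by
  have hnat : (2 * p + 1) * (2 * p) * (2 * p - 1) ≤ (2 * p + 3) ^ 3 := by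
    calc (2 * p + 1) * (2 * p) * (2 * p - 1)
        ≤ (2 * p + 3) * (2 * p + 3) * (2 * p + 3) :=
          Nat.mul_le_mul (Nat.mul_le_mul (by omega) (by omega)) (by omega)
      _ = (2 * p + 3) ^ 3 := by ring
  have hc : ((2 * p + 1 : ℕ) : ℝ) * ((2 * p : ℕ) : ℝ) * ((2 * p - 1 : ℕ) : ℝ)
      ≤ (2 * (p : ℝ) + 3) ^ 3 := by
    have h2 := Nat.cast_le (α := ℝ) |>.2 hnat
    push_cast at h2
    calc ((2 * p + 1 : ℕ) : ℝ) * ((2 * p : ℕ) : ℝ) * ((2 * p - 1 : ℕ) : ℝ)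
        = (2 * (p : ℝ) + 1) * (2 * (p : ℝ)) * ((2 * p - 1 : ℕ) : ℝ) := by push_cast; ring
      _ ≤ (2 * (p : ℝ) + 3) ^ 3 := by
          convert h2 using 2
  exact hb_gen (by positivity) hc hy (by omega)

private lemma hasDeriv0 (n : ℕ) (μ a₁ : ℝ) (p : ℕ) (y : ℝ) :
    HasDerivAt (fun z : ℝ => oddCoeff n μ a₁ p * z ^ (2 * p + 1)) (F1 n μ a₁ p y) y := by
  have := (hasDerivAt_pow (2 * p + 1) y).const_mul (oddCoeff n μ a₁ p)
  refine this.congr_deriv ?_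
  rw [F1, Nat.add_sub_cancel]
  ring

private lemma hasDeriv1 (n : ℕ) (μ a₁ : ℝ) (p : ℕ) (y : ℝ) :
    HasDerivAt (F1 n μ a₁ p) (F2 n μ a₁ p y) y := by
  have := (hasDerivAt_pow (2 * p) y).const_mul (((2 * p + 1 : ℕ) : ℝ) * oddCoeff n μ a₁ p)
  refine this.congr_deriv ?_
  rw [F2]
  ring

private lemma hasDeriv2 (n : ℕ) (μ a₁ : ℝ) (p : ℕ) (y : ℝ) :
    HasDerivAt (F2 n μ a₁ p) (F3 n μ a₁ p y) y := by
  have := (hasDerivAt_pow (2 * p - 1) y).const_mul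
    (((2 * p + 1 : ℕ) : ℝ) * ((2 * p : ℕ) : ℝ) * oddCoeff n μ a₁ p)
  refine this.congr_deriv ?_
  rw [F3, show 2 * p - 1 - 1 = 2 * p - 2 from by omega]
  ring

private lemma psiOne_analytic (n : ℕ) (hn : 5 ≤ n) (hodd : Odd n) (μ a₁ : ℝ) (hμ : 0 < μ) :
    AnalyticOnNhd ℝ (psiOne n μ a₁) Set.univ := by
  classical
  set c : ℕ → ℝ := fun k => if k % 2 = 1 then oddCoeff n μ a₁ (k / 2) else 0 with hcdef
  have hinj : Function.Injective (fun p : ℕ => 2 * p + 1) := fun a b h => by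
    simp only at h; omega
  have hrange : ∀ k : ℕ, k ∉ Set.range (fun p : ℕ => 2 * p + 1) → c k = 0 := by
    intro k hk
    rw [hcdef]
    simp only
    rw [if_neg]
    intro h
    exact hk ⟨k / 2, by show 2 * (k / 2) + 1 = k; omega⟩
  have hck : ∀ p : ℕ, c (2 * p + 1) = oddCoeff n μ a₁ p := by
    intro p
    rw [hcdef]
    simp only
    rw [if_pos (by omega : (2 * p + 1) % 2 = 1)]
    congr 1
    omega
  have hrad : (FormalMultilinearSeries.ofScalars ℝ c).radius = ⊤ := by
    apply FormalMultilinearSeries.radius_eq_top_of_summable_norm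
    intro r
    have hs : Summable fun p : ℕ => |c (2 * p + 1)| * (r : ℝ) ^ (2 * p + 1) :=
      (sAbs n hn hodd μ a₁ hμ (r : ℝ) r.coe_nonneg).congr fun p => by rw [hck]
    have h2 : Summable fun k : ℕ => |c k| * (r : ℝ) ^ k := by
      rw [← Function.Injective.summable_iff hinj (fun k hk => by rw [hrange k hk]; simp)]
      exact hs
    exact h2.congr fun k => by
      rw [FormalMultilinearSeries.ofScalars_norm, Real.norm_eq_abs]
  have hsum : psiOne n μ a₁ = (FormalMultilinearSeries.ofScalars ℝ c).sum := by
    funext t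
    have h1 : (FormalMultilinearSeries.ofScalars ℝ c).sum t = ∑' k : ℕ, c k * t ^ k := by
      rw [show (FormalMultilinearSeries.ofScalars ℝ c).sum t
          = FormalMultilinearSeries.ofScalarsSum c t from rfl,
        FormalMultilinearSeries.ofScalars_sum_eq]
      simp [smul_eq_mul]
    rw [h1, psiOne]
    have hsupp : Function.support (fun k : ℕ => c k * t ^ k)
        ⊆ Set.range (fun p : ℕ => 2 * p + 1) := by
      intro k hk
      by_contra h
      exact hk (by rw [Function.mem_support] at *; push_neg; rw [hrange k h]; ring)
    rw [← Function.Injective.tsum_eq hinj hsupp]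
    exact tsum_congr fun p => by rw [hck]
  rw [hsum]
  intro x _
  exact ((FormalMultilinearSeries.ofScalars ℝ c).hasFPowerSeriesOnBall
      (by rw [hrad]; exact ENNReal.zero_lt_top)).analyticAt_of_mem
    (by rw [EMetric.mem_ball, hrad]; exact edist_lt_top x 0)

private lemma key_step (n : ℕ) (hodd : Odd n) (μ a₁ : ℝ) (p : ℕ) {t : ℝ} (ht : t ≠ 0) :
    μ * F1 n μ a₁ p t + ((1 / 4 : ℝ) * F3 n μ a₁ (p + 1) t +
      ((n : ℝ) - 1) * ((n : ℝ) - 3) / (4 * t ^ 3) *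
        (oddCoeff n μ a₁ (p + 1) * t ^ (2 * (p + 1) + 1) - t * F1 n μ a₁ (p + 1) t)) = 0 := by
  have hD := aux_ne n hodd p
  have hp1 : ((p : ℝ) + 1) ≠ 0 := by positivity
  rw [F1, F1, F3]
  simp only [oddCoeff]
  rw [show 2 * (p + 1) - 2 = 2 * p from by omega, show 2 * (p + 1) - 1 = 2 * p + 1 from by omega,
    show 2 * (p + 1) + 1 = 2 * p + 3 from by omega, show 2 * (p + 1) = 2 * p + 2 from by omega]
  push_cast
  set D : ℝ := (2 * ((p : ℝ) + 1) + 1) * (2 * ((p : ℝ) + 1) - 1) - ((n : ℝ) - 1) * ((n : ℝ) - 3) with hDdef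
  field_simp
  rw [hDdef]
  ring

/-- For `n ≥ 5` odd and `μ > 0`, the series `ψ₁(t) = Σ a_{2p+1}t^{2p+1}`
converges for every `t ∈ ℝ`, `ψ₁` is smooth on `[0,1]`, and `ψ₁` solves
`μψ' + (1/4)ψ''' + ((n−1)(n−3)/(4t³))(ψ − tψ') = 0` on `(0,1]`. -/
theorem stmt_10 (n : ℕ) (hn : 5 ≤ n) (hodd : Odd n) (μ a₁ : ℝ) (hμ : 0 < μ) :
    (∀ t : ℝ, Summable fun p : ℕ => oddCoeff n μ a₁ p * t ^ (2 * p + 1)) ∧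
    ContDiffOn ℝ (⊤ : ℕ∞) (psiOne n μ a₁) (Icc (0 : ℝ) 1) ∧
    ∀ t ∈ Ioc (0 : ℝ) 1,
      μ * deriv (psiOne n μ a₁) t + (1 / 4) * deriv^[3] (psiOne n μ a₁) t +
          ((n : ℝ) - 1) * ((n : ℝ) - 3) / (4 * t ^ 3) *
            (psiOne n μ a₁ t - t * deriv (psiOne n μ a₁) t) = 0 := by
  have hB : IsOpen (Metric.ball (0 : ℝ) 2) := Metric.isOpen_ball
  have hBc : IsPreconnected (Metric.ball (0 : ℝ) 2) := (convex_ball (0 : ℝ) 2).isPreconnected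
  have h0B : (0 : ℝ) ∈ Metric.ball (0 : ℝ) 2 := Metric.mem_ball_self (by norm_num)
  have hyabs : ∀ y ∈ Metric.ball (0 : ℝ) 2, |y| ≤ 2 := fun y hy => by
    rw [Metric.mem_ball, Real.dist_eq, sub_zero] at hy
    exact hy.le
  have hu := sU n hn hodd μ a₁ hμ
  have s1 : ∀ y ∈ Metric.ball (0 : ℝ) 2, Summable (fun p => F1 n μ a₁ p y) := fun y hy =>
    Summable.of_norm_bounded hu fun p => hb1 n μ a₁ p (hyabs y hy)
  have s2 : ∀ y ∈ Metric.ball (0 : ℝ) 2, Summable (fun p => F2 n μ a₁ p y) := fun y hy =>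
    Summable.of_norm_bounded hu fun p => hb2 n μ a₁ p (hyabs y hy)
  have s3 : ∀ y ∈ Metric.ball (0 : ℝ) 2, Summable (fun p => F3 n μ a₁ p y) := fun y hy =>
    Summable.of_norm_bounded hu fun p => hb3 n μ a₁ p (hyabs y hy)
  have Hd1 : ∀ y ∈ Metric.ball (0 : ℝ) 2,
      HasDerivAt (psiOne n μ a₁) (∑' p, F1 n μ a₁ p y) y := by
    intro y hy
    have := hasDerivAt_tsum_of_isPreconnected hu hB hBc
      (fun p z _ => hasDeriv0 n μ a₁ p z) (fun p z hz => hb1 n μ a₁ p (hyabs z hz)) h0B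
      (S0 n hn hodd μ a₁ hμ 0) hy
    exact this
  have Hd2 : ∀ y ∈ Metric.ball (0 : ℝ) 2,
      HasDerivAt (fun z => ∑' p, F1 n μ a₁ p z) (∑' p, F2 n μ a₁ p y) y := fun y hy =>
    hasDerivAt_tsum_of_isPreconnected hu hB hBc
      (fun p z _ => hasDeriv1 n μ a₁ p z) (fun p z hz => hb2 n μ a₁ p (hyabs z hz)) h0B
      (s1 0 h0B) hy
  have Hd3 : ∀ y ∈ Metric.ball (0 : ℝ) 2,
      HasDerivAt (fun z => ∑' p, F2 n μ a₁ p z) (∑' p, F3 n μ a₁ p y) y := fun y hy =>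
    hasDerivAt_tsum_of_isPreconnected hu hB hBc
      (fun p z _ => hasDeriv2 n μ a₁ p z) (fun p z hz => hb3 n μ a₁ p (hyabs z hz)) h0B
      (s2 0 h0B) hy
  have e1 : Set.EqOn (deriv (psiOne n μ a₁)) (fun y => ∑' p, F1 n μ a₁ p y)
      (Metric.ball (0 : ℝ) 2) := fun y hy => (Hd1 y hy).deriv
  have e2 : Set.EqOn (deriv (deriv (psiOne n μ a₁))) (fun y => ∑' p, F2 n μ a₁ p y)
      (Metric.ball (0 : ℝ) 2) := by
    intro y hy
    have heq : deriv (psiOne n μ a₁) =ᶠ[nhds y] (fun z => ∑' p, F1 n μ a₁ p z) :=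
      Filter.eventuallyEq_of_mem (hB.mem_nhds hy) e1
    rw [heq.deriv_eq]
    exact (Hd2 y hy).deriv
  have e3 : Set.EqOn (deriv (deriv (deriv (psiOne n μ a₁)))) (fun y => ∑' p, F3 n μ a₁ p y)
      (Metric.ball (0 : ℝ) 2) := by
    intro y hy
    have heq : deriv (deriv (psiOne n μ a₁)) =ᶠ[nhds y] (fun z => ∑' p, F2 n μ a₁ p z) :=
      Filter.eventuallyEq_of_mem (hB.mem_nhds hy) e2
    rw [heq.deriv_eq]
    exact (Hd3 y hy).deriv
  refine ⟨S0 n hn hodd μ a₁ hμ, ?_, ?_⟩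
  · have hA : AnalyticOnNhd ℝ (psiOne n μ a₁) (Icc (0 : ℝ) 1) := fun x _ =>
      psiOne_analytic n hn hodd μ a₁ hμ x (Set.mem_univ x)
    exact hA.contDiffOn_of_completeSpace
  · intro t ht
    obtain ⟨ht0, ht1⟩ := ht
    have htB : t ∈ Metric.ball (0 : ℝ) 2 := by
      rw [Metric.mem_ball, Real.dist_eq, sub_zero, abs_of_pos ht0]
      linarith
    have hd1 : deriv (psiOne n μ a₁) t = ∑' p, F1 n μ a₁ p t := e1 htB
    have hd3 : deriv^[3] (psiOne n μ a₁) t = ∑' p, F3 n μ a₁ p t := by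
      rw [show deriv^[3] (psiOne n μ a₁) = deriv (deriv (deriv (psiOne n μ a₁))) from rfl]
      exact e3 htB
    rw [hd1, hd3, psiOne]
    have s0t := S0 n hn hodd μ a₁ hμ t
    have s1t := s1 t htB
    have s3t := s3 t htB
    have ht' : t ≠ 0 := ne_of_gt ht0
    have e01 : μ * (∑' p, F1 n μ a₁ p t) = ∑' p, μ * F1 n μ a₁ p t := tsum_mul_left.symm
    have e02 : (1 / 4 : ℝ) * (∑' p, F3 n μ a₁ p t)
        = ∑' p, (1 / 4 : ℝ) * F3 n μ a₁ p t := tsum_mul_left.symm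
    have e03 : (∑' p, oddCoeff n μ a₁ p * t ^ (2 * p + 1)) - t * (∑' p, F1 n μ a₁ p t)
        = ∑' p, (oddCoeff n μ a₁ p * t ^ (2 * p + 1) - t * F1 n μ a₁ p t) := by
      rw [← tsum_mul_left]
      exact (Summable.tsum_sub s0t (s1t.mul_left t)).symm
    have e04 : ((n : ℝ) - 1) * ((n : ℝ) - 3) / (4 * t ^ 3) *
          (∑' p, (oddCoeff n μ a₁ p * t ^ (2 * p + 1) - t * F1 n μ a₁ p t))
        = ∑' p, ((n : ℝ) - 1) * ((n : ℝ) - 3) / (4 * t ^ 3) *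
            (oddCoeff n μ a₁ p * t ^ (2 * p + 1) - t * F1 n μ a₁ p t) := tsum_mul_left.symm
    rw [e01, e02, e03, e04]
    have sA : Summable (fun p => μ * F1 n μ a₁ p t) := s1t.mul_left μ
    have sB : Summable (fun p => (1 / 4 : ℝ) * F3 n μ a₁ p t +
        ((n : ℝ) - 1) * ((n : ℝ) - 3) / (4 * t ^ 3) *
          (oddCoeff n μ a₁ p * t ^ (2 * p + 1) - t * F1 n μ a₁ p t)) :=
      (s3t.mul_left _).add ((s0t.sub (s1t.mul_left t)).mul_left _)
    rw [add_assoc, ← Summable.tsum_add (s3t.mul_left _) ((s0t.sub (s1t.mul_left t)).mul_left _)]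
    rw [Summable.tsum_eq_zero_add sB]
    have hB0 : (1 / 4 : ℝ) * F3 n μ a₁ 0 t +
        ((n : ℝ) - 1) * ((n : ℝ) - 3) / (4 * t ^ 3) *
          (oddCoeff n μ a₁ 0 * t ^ (2 * 0 + 1) - t * F1 n μ a₁ 0 t) = 0 := by
      rw [F1, F3]
      norm_num
      exact Or.inr (by ring)
    rw [hB0, zero_add, ← Summable.tsum_add sA ((summable_nat_add_iff 1).2 sB)]
    have : ∀ p : ℕ, μ * F1 n μ a₁ p t +
        ((1 / 4 : ℝ) * F3 n μ a₁ (p + 1) t +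
          ((n : ℝ) - 1) * ((n : ℝ) - 3) / (4 * t ^ 3) *
            (oddCoeff n μ a₁ (p + 1) * t ^ (2 * (p + 1) + 1) - t * F1 n μ a₁ (p + 1) t))
        = (0 : ℝ) := fun p => key_step n hodd μ a₁ p ht'
    rw [tsum_congr this, tsum_zero]
end

section
/- Let n ≥ 5 be an odd integer. There exists a constant μ(n) > 0, depending only on n, such that for every 0 < μ ≤ μ(n): (a) if a₁ > 0 then ψ₁(t) = Σ_{p≥0} a_{2p+1} t^{2p+1} > 0 for all t ∈ (0,1]; and (b) if a_{n−1} < 0 then ψ₂(t) = Σ_{p≥0} a_{2p} t^{2p} < 0 for all t ∈ (0,1]. -/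
/-! For `μ ≤ 1/16` consecutive nonzero terms of either series shrink by a factor `4μ ≤ 1/4` on
`(0,1]`: the denominators of the recursions are nonzero integers (odd for `ψ₁`, positive once
`2p ≥ n − 1` for `ψ₂`), and `t² ≤ 1`. A series whose terms shrink by a factor `q < 1/2` has the
sign of its first term, because its tail is at most `q/(1 − q) < 1` times that term. The first
nonzero terms are `a₁ t` and `a_{n−1} t^{n−1}`. -/

open Set

/-- Coefficients `a_{2p}` (indexed by `p`) of the even power-series solution `ψ₂`:
`a_{2p} = 0` for `p < (n−1)/2`, `a_{n−1}` given (at `p = (n−1)/2`), and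
`a_{2p} = −(8(p−1)μ/((2p−1)[4p(p−1)−(n−1)(n−3)])) a_{2p−2}` for `p ≥ (n+1)/2`. -/
noncomputable def evenCoeff (n : ℕ) (μ aN : ℝ) : ℕ → ℝ
  | 0 => 0
  | p + 1 =>
    if p + 1 < (n - 1) / 2 then 0
    else if p + 1 = (n - 1) / 2 then aN
    else
      -(8 * (((p : ℝ) + 1) - 1) * μ /
          ((2 * ((p : ℝ) + 1) - 1) *
            (4 * ((p : ℝ) + 1) * (((p : ℝ) + 1) - 1) - ((n : ℝ) - 1) * ((n : ℝ) - 3)))) *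
        evenCoeff n μ aN p

/-- `ψ₂(t) = Σ_{p≥0} a_{2p} t^{2p}`. -/
noncomputable def psiTwo (n : ℕ) (μ aN : ℝ) (t : ℝ) : ℝ :=
  ∑' p : ℕ, evenCoeff n μ aN p * t ^ (2 * p)

theorem tsum_pos_of_abs_succ_le {f : ℕ → ℝ} {q : ℝ} (hq₀ : 0 ≤ q) (hq : q < 1 / 2)
    (hf₀ : 0 < f 0) (hf : ∀ k, |f (k + 1)| ≤ q * |f k|) : 0 < ∑' k, f k := by
  have hgeom : ∀ k, ‖f k‖ ≤ f 0 * q ^ k := fun k => by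
    simpa [mul_comm, abs_of_pos hf₀] using
      le_geom (u := fun k => |f k|) hq₀ k (fun k _ => hf k)
  have hsum : Summable f :=
    .of_norm_bounded ((summable_geometric_of_lt_one hq₀ (by linarith)).mul_left (f 0)) hgeom
  have htail : ‖∑' k, f (k + 1)‖ ≤ f 0 * q * (1 - q)⁻¹ :=
    tsum_of_norm_bounded (f := fun k => f (k + 1))
      ((hasSum_geometric_of_lt_one hq₀ (by linarith)).mul_left (f 0 * q))
      fun k => by simpa [pow_succ', mul_assoc] using hgeom (k + 1)
  have hratio : q * (1 - q)⁻¹ < 1 := by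
    rw [← div_eq_mul_inv, div_lt_one (by linarith)]
    linarith
  rw [Real.norm_eq_abs] at htail
  rw [hsum.tsum_eq_zero_add]
  nlinarith [neg_abs_le (∑' k, f (k + 1))]

theorem abs_mul_pow_add_two_le {c c' q t : ℝ} (hc : |c'| ≤ q * |c|) (ht : |t| ≤ 1) (k : ℕ) :
    |c' * t ^ (k + 2)| ≤ q * |c * t ^ k| := by
  have ht2 : |t| ^ 2 ≤ 1 := pow_le_one₀ (abs_nonneg t) ht
  rw [abs_mul, abs_mul, abs_pow, abs_pow, pow_add]
  calc |c'| * (|t| ^ k * |t| ^ 2) ≤ |c'| * |t| ^ k := by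
        gcongr
        exact mul_le_of_le_one_right (by positivity) ht2
    _ ≤ q * (|c| * |t| ^ k) := by
        rw [← mul_assoc]
        gcongr

theorem abs_neg_div_mul_mul_le {x y D μ c : ℝ} (hμ : 0 ≤ μ) (hx : 0 ≤ x) (hy : 0 < y)
    (hxy : x ≤ 4 * y) (hD : 1 ≤ |D|) : |-(x * μ / (y * D)) * c| ≤ 4 * μ * |c| := by
  rw [abs_mul, abs_neg, abs_div, abs_mul, abs_mul, abs_of_nonneg hx, abs_of_nonneg hμ,
    abs_of_pos hy]
  gcongr
  rw [div_le_iff₀ (by positivity)]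
  nlinarith [mul_le_mul_of_nonneg_right hxy hμ,
    mul_le_mul_of_nonneg_left hD (by positivity : 0 ≤ 4 * μ * y)]

theorem one_le_abs_two_mul_add_one (M : ℤ) : (1 : ℝ) ≤ |2 * (M : ℝ) + 1| := by
  have : (1 : ℤ) ≤ |2 * M + 1| := Int.one_le_abs (by omega)
  exact_mod_cast this

section Coefficients

variable {n : ℕ} {μ : ℝ}

theorem abs_oddCoeff_succ_le (hodd : Odd n) (hμ : 0 ≤ μ) (a₁ : ℝ) (p : ℕ) :
    |oddCoeff n μ a₁ (p + 1)| ≤ 4 * μ * |oddCoeff n μ a₁ p| := by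
  obtain ⟨k, rfl⟩ := hodd
  have hp : (0 : ℝ) ≤ p := p.cast_nonneg
  refine abs_neg_div_mul_mul_le hμ (by linarith) (by linarith) (by linarith) ?_
  -- for `n = 2k + 1` the denominator `(2p + 3)(2p + 1) − 4k(k − 1)` is odd
  convert one_le_abs_two_mul_add_one (2 * p ^ 2 + 4 * p + 1 - 2 * k * (k - 1)) using 2
  push_cast
  ring

theorem evenCoeff_of_lt (aN : ℝ) {p : ℕ} (hp : p < (n - 1) / 2) : evenCoeff n μ aN p = 0 := by
  cases p with
  | zero => rfl
  | succ q => exact if_pos hp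

theorem evenCoeff_self (hn : 3 ≤ n) (aN : ℝ) : evenCoeff n μ aN ((n - 1) / 2) = aN := by
  obtain ⟨q, hq⟩ : ∃ q, (n - 1) / 2 = q + 1 := ⟨(n - 1) / 2 - 1, by omega⟩
  rw [hq, evenCoeff, if_neg (by omega), if_pos hq.symm]

theorem abs_evenCoeff_succ_le (hn : 3 ≤ n) (hodd : Odd n) (hμ : 0 ≤ μ) (aN : ℝ) {p : ℕ}
    (hp : (n - 1) / 2 ≤ p) :
    |evenCoeff n μ aN (p + 1)| ≤ 4 * μ * |evenCoeff n μ aN p| := by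
  obtain ⟨k, rfl⟩ := hodd
  have hk : (1 : ℝ) ≤ k := by exact_mod_cast (by omega : 1 ≤ k)
  have hkp : (k : ℝ) ≤ p := by exact_mod_cast (by omega : k ≤ p)
  rw [evenCoeff, if_neg (by omega), if_neg (by omega)]
  refine abs_neg_div_mul_mul_le hμ (by linarith) (by linarith) (by linarith) ?_
  refine le_trans ?_ (le_abs_self _)
  push_cast
  nlinarith

theorem psiTwo_eq_tsum_nat_add (aN t : ℝ) :
    psiTwo n μ aN t =
      ∑' k, evenCoeff n μ aN (k + (n - 1) / 2) * t ^ (2 * (k + (n - 1) / 2)) := by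
  refine ((add_left_injective ((n - 1) / 2)).tsum_eq
    (f := fun p => evenCoeff n μ aN p * t ^ (2 * p)) fun p hp => ?_).symm
  refine ⟨p - (n - 1) / 2, Nat.sub_add_cancel (not_lt.1 fun hlt => hp ?_)⟩
  simp [evenCoeff_of_lt aN hlt]

end Coefficients

/-- For `n ≥ 5` odd there is a constant `μ(n) > 0`, depending only on `n`,
such that for every `0 < μ ≤ μ(n)`: (a) if `a₁ > 0` then `ψ₁ > 0` on `(0,1]`; and
(b) if `a_{n−1} < 0` then `ψ₂ < 0` on `(0,1]`. -/
theorem stmt_12 (n : ℕ) (hn : 5 ≤ n) (hodd : Odd n) :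
    ∃ μn : ℝ, 0 < μn ∧ ∀ μ : ℝ, 0 < μ → μ ≤ μn →
      (∀ a₁ : ℝ, 0 < a₁ → ∀ t ∈ Ioc (0 : ℝ) 1, 0 < psiOne n μ a₁ t) ∧
      (∀ aN : ℝ, aN < 0 → ∀ t ∈ Ioc (0 : ℝ) 1, psiTwo n μ aN t < 0) := by
  refine ⟨1 / 16, by norm_num, fun μ hμ hμn => ⟨fun a₁ ha₁ t ht => ?_, fun aN haN t ht => ?_⟩⟩
  all_goals have ht₁ : |t| ≤ 1 := (abs_of_pos ht.1).symm ▸ ht.2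
  · refine tsum_pos_of_abs_succ_le (q := 4 * μ) (by positivity) (by linarith)
      (by simpa [oddCoeff] using mul_pos ha₁ ht.1) fun p => ?_
    rw [show 2 * (p + 1) + 1 = 2 * p + 1 + 2 by ring]
    exact abs_mul_pow_add_two_le (abs_oddCoeff_succ_le hodd hμ.le a₁ p) ht₁ _
  · set m := (n - 1) / 2
    rw [psiTwo_eq_tsum_nat_add, ← neg_pos, ← tsum_neg]
    refine tsum_pos_of_abs_succ_le (q := 4 * μ) (by positivity) (by linarith)
      ?_ fun k => ?_
    · simpa [evenCoeff_self (by omega : 3 ≤ n)] using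
        mul_pos (neg_pos.2 haN) (pow_pos ht.1 (2 * m))
    rw [abs_neg, abs_neg, show k + 1 + m = k + m + 1 by omega,
      show 2 * (k + m + 1) = 2 * (k + m) + 2 by ring]
    exact abs_mul_pow_add_two_le
      (abs_evenCoeff_succ_le (by omega) hodd hμ.le aN (Nat.le_add_left m k)) ht₁ _
end

section
/- Let n ≥ 5 be an odd integer and let μ(n) > 0 be a constant such that for all 0 < μ ≤ μ(n) one has ψ₁ > 0 and ψ₂ < 0 on (0,1] whenever a₁ > 0 and a_{n−1} < 0. Then one can choose a₁ > 0 and a_{n−1} < 0 such that the function ψ̄(t) := ψ₁(t) + ψ₂(t) satisfies ψ̄(t) ≥ 0 for all t ∈ [0,1] and all 0 < μ ≤ μ(n). -/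
open Set

open Set

/-! `ψ₁(t) = t·F(μ, t)` with `F` a power series in `μ` and `t²`. For `0 ≤ μ ≤ μ(n)` its
coefficients are dominated by those at `μ(n)`, which decay geometrically, so `F` is continuous
on the compact rectangle `[0, μ(n)] × [0, 1]`. There `F = 1` where `μ = 0` or `t = 0`, and `F > 0`
elsewhere by the positivity of `ψ₁`; hence `F ≥ m > 0`. The same domination, and the vanishing
of the constant term of `ψ₂`, give `|ψ₂(t)| ≤ |a_{n−1}|·M·t²` uniformly in `μ`. Taking `a₁ = 1`
and `a_{n−1} = −m/(M + 1)` yields `ψ̄(t) ≥ m t − m t² ≥ 0`. -/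

open Filter

lemma summable_abs_of_abs_succ_le_div {a : ℕ → ℝ} {C : ℝ}
    (h : ∀ᶠ p : ℕ in atTop, |a (p + 1)| ≤ C / p * |a p|) : Summable fun p => |a p| := by
  refine summable_of_ratio_norm_eventually_le (r := 1 / 2) (by norm_num) ?_
  have hC : ∀ᶠ p : ℕ in atTop, C / p ≤ 1 / 2 :=
    (tendsto_const_div_atTop_nhds_zero_nat C).eventually (eventually_le_nhds (by norm_num))
  filter_upwards [h, hC] with p hp hCp
  simp only [Real.norm_eq_abs, abs_abs]
  exact hp.trans (mul_le_mul_of_nonneg_right hCp (abs_nonneg _))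

noncomputable def oddFactor (n : ℕ) (μ : ℝ) (p : ℕ) : ℝ :=
  -(2 * (2 * ((p : ℝ) + 1) - 1) * μ /
    (((p : ℝ) + 1) *
      ((2 * ((p : ℝ) + 1) + 1) * (2 * ((p : ℝ) + 1) - 1) - ((n : ℝ) - 1) * ((n : ℝ) - 3))))

noncomputable def evenFactor (n : ℕ) (μ : ℝ) (p : ℕ) : ℝ :=
  -(8 * (((p : ℝ) + 1) - 1) * μ /
    ((2 * ((p : ℝ) + 1) - 1) *
      (4 * ((p : ℝ) + 1) * (((p : ℝ) + 1) - 1) - ((n : ℝ) - 1) * ((n : ℝ) - 3))))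

lemma oddCoeff_succ (n : ℕ) (μ a : ℝ) (p : ℕ) :
    oddCoeff n μ a (p + 1) = oddFactor n μ p * oddCoeff n μ a p := rfl

lemma evenCoeff_succ (n : ℕ) (μ a : ℝ) (p : ℕ) :
    evenCoeff n μ a (p + 1) =
      if p + 1 < (n - 1) / 2 then 0
      else if p + 1 = (n - 1) / 2 then a
      else evenFactor n μ p * evenCoeff n μ a p := rfl

lemma evenCoeff_succ_of_le {n p : ℕ} (hp : n ≤ p) (μ a : ℝ) :
    evenCoeff n μ a (p + 1) = evenFactor n μ p * evenCoeff n μ a p := by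
  rw [evenCoeff_succ, if_neg (by omega), if_neg (by omega)]

lemma abs_oddFactor_le_of_abs_le (n : ℕ) {μ μ' : ℝ} (hμ : |μ| ≤ |μ'|) (p : ℕ) :
    |oddFactor n μ p| ≤ |oddFactor n μ' p| := by
  simp only [oddFactor, abs_neg, abs_div, abs_mul]
  gcongr

lemma abs_evenFactor_le_of_abs_le (n : ℕ) {μ μ' : ℝ} (hμ : |μ| ≤ |μ'|) (p : ℕ) :
    |evenFactor n μ p| ≤ |evenFactor n μ' p| := by
  simp only [evenFactor, abs_neg, abs_div, abs_mul]
  gcongr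

lemma abs_oddFactor_le {n p : ℕ} (hnp : n ≤ p) (hp : 1 ≤ p) (μ : ℝ) :
    |oddFactor n μ p| ≤ 2 * |μ| / p := by
  have hn : (n : ℝ) ≤ p := by exact_mod_cast hnp
  have hp : (1 : ℝ) ≤ p := by exact_mod_cast hp
  set D := ((p : ℝ) + 1) *
    ((2 * ((p : ℝ) + 1) + 1) * (2 * ((p : ℝ) + 1) - 1) - ((n : ℝ) - 1) * ((n : ℝ) - 3))
  -- `(n - 1)(n - 3) ≤ n² + 3 ≤ p² + 3`
  have hD : 3 * (p : ℝ) ^ 3 ≤ D := by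
    nlinarith [mul_le_mul hn hn n.cast_nonneg (by linarith)]
  have hpD : (2 * (p : ℝ) + 1) * p ≤ D := by
    nlinarith [mul_nonneg (mul_nonneg (by linarith : (0 : ℝ) ≤ p) (by linarith : (0 : ℝ) ≤ 3 * p + 1))
      (by linarith : (0 : ℝ) ≤ p - 1)]
  have hD0 : 0 < D := lt_of_lt_of_le (by positivity) hD
  rw [oddFactor, abs_neg, abs_div, abs_mul, abs_of_pos (by linarith : (0 : ℝ) < 2 * (2 * (p + 1) - 1)),
    abs_of_pos hD0, div_le_div_iff₀ hD0 (by positivity)]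
  nlinarith [mul_le_mul_of_nonneg_left hpD (abs_nonneg μ)]

lemma abs_evenFactor_le {n p : ℕ} (hnp : n ≤ p) (hp : 1 ≤ p) (μ : ℝ) :
    |evenFactor n μ p| ≤ 2 * |μ| / p := by
  have hn : (n : ℝ) ≤ p := by exact_mod_cast hnp
  have hp : (1 : ℝ) ≤ p := by exact_mod_cast hp
  set D := (2 * ((p : ℝ) + 1) - 1) *
    (4 * ((p : ℝ) + 1) * (((p : ℝ) + 1) - 1) - ((n : ℝ) - 1) * ((n : ℝ) - 3))
  have hD : 4 * (p : ℝ) ^ 2 ≤ D := by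
    nlinarith [mul_le_mul hn hn n.cast_nonneg (by linarith)]
  have hD0 : 0 < D := lt_of_lt_of_le (by positivity) hD
  rw [evenFactor, abs_neg, abs_div, abs_mul, abs_of_pos (by linarith : (0 : ℝ) < 8 * (p + 1 - 1)),
    abs_of_pos hD0, div_le_div_iff₀ hD0 (by positivity)]
  nlinarith [mul_le_mul_of_nonneg_left hD (abs_nonneg μ)]

lemma continuous_oddFactor (n p : ℕ) : Continuous fun μ => oddFactor n μ p := by
  unfold oddFactor; fun_prop

lemma abs_oddCoeff_le_of_abs_le (n : ℕ) {μ μ' : ℝ} (hμ : |μ| ≤ |μ'|) (a : ℝ) :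
    ∀ p, |oddCoeff n μ a p| ≤ |oddCoeff n μ' a p|
  | 0 => le_rfl
  | p + 1 => by
    rw [oddCoeff_succ, oddCoeff_succ, abs_mul, abs_mul]
    exact mul_le_mul (abs_oddFactor_le_of_abs_le n hμ p) (abs_oddCoeff_le_of_abs_le n hμ a p)
      (abs_nonneg _) (abs_nonneg _)

lemma abs_evenCoeff_le_of_abs_le (n : ℕ) {μ μ' : ℝ} (hμ : |μ| ≤ |μ'|) (a : ℝ) :
    ∀ p, |evenCoeff n μ a p| ≤ |evenCoeff n μ' a p|
  | 0 => le_rfl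
  | p + 1 => by
    rw [evenCoeff_succ, evenCoeff_succ]
    split_ifs
    · exact le_rfl
    · exact le_rfl
    · rw [abs_mul, abs_mul]
      exact mul_le_mul (abs_evenFactor_le_of_abs_le n hμ p) (abs_evenCoeff_le_of_abs_le n hμ a p)
        (abs_nonneg _) (abs_nonneg _)

lemma evenCoeff_eq_mul (n : ℕ) (μ a : ℝ) : ∀ p, evenCoeff n μ a p = a * evenCoeff n μ 1 p
  | 0 => by simp [evenCoeff]
  | p + 1 => by
    rw [evenCoeff_succ, evenCoeff_succ, evenCoeff_eq_mul n μ a p]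
    split_ifs <;> ring

lemma oddCoeff_zero_succ (n : ℕ) (a : ℝ) (p : ℕ) : oddCoeff n 0 a (p + 1) = 0 := by
  simp [oddCoeff_succ, oddFactor]

lemma continuous_oddCoeff (n : ℕ) (a : ℝ) : ∀ p, Continuous fun μ => oddCoeff n μ a p
  | 0 => continuous_const
  | p + 1 => by
    simp only [oddCoeff_succ]
    exact (continuous_oddFactor n p).mul (continuous_oddCoeff n a p)

lemma summable_abs_oddCoeff (n : ℕ) (μ a : ℝ) : Summable fun p => |oddCoeff n μ a p| := by
  refine summable_abs_of_abs_succ_le_div (C := 2 * |μ|) ?_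
  filter_upwards [eventually_ge_atTop (max n 1)] with p hp
  rw [oddCoeff_succ, abs_mul]
  exact mul_le_mul_of_nonneg_right
    (abs_oddFactor_le (le_of_max_le_left hp) (le_of_max_le_right hp) μ) (abs_nonneg _)

lemma summable_abs_evenCoeff (n : ℕ) (μ a : ℝ) : Summable fun p => |evenCoeff n μ a p| := by
  refine summable_abs_of_abs_succ_le_div (C := 2 * |μ|) ?_
  filter_upwards [eventually_ge_atTop (max n 1)] with p hp
  rw [evenCoeff_succ_of_le (le_of_max_le_left hp), abs_mul]
  exact mul_le_mul_of_nonneg_right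
    (abs_evenFactor_le (le_of_max_le_left hp) (le_of_max_le_right hp) μ) (abs_nonneg _)

lemma psiOne_eq_mul_tsum (n : ℕ) (μ a t : ℝ) :
    psiOne n μ a t = t * ∑' p, oddCoeff n μ a p * t ^ (2 * p) := by
  rw [psiOne, ← tsum_mul_left]
  congr 1
  ext p
  ring

lemma continuousOn_tsum_oddCoeff_mul_pow (n : ℕ) (μn a : ℝ) :
    ContinuousOn (fun x : ℝ × ℝ => ∑' p, oddCoeff n x.1 a p * x.2 ^ (2 * p))
      (Icc 0 μn ×ˢ Icc 0 1) := by
  refine continuousOn_tsum (fun p => ?_) (summable_abs_oddCoeff n μn a) ?_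
  · exact (((continuous_oddCoeff n a p).comp continuous_fst).mul
      (continuous_snd.pow _)).continuousOn
  · rintro p ⟨μ, t⟩ ⟨⟨hμ0, hμ⟩, ht0, ht1⟩
    rw [Real.norm_eq_abs, abs_mul, abs_pow, abs_of_nonneg ht0]
    exact (mul_le_of_le_one_right (abs_nonneg _) (pow_le_one₀ ht0 ht1)).trans
      (abs_oddCoeff_le_of_abs_le n (abs_le_abs_of_nonneg hμ0 hμ) a p)

lemma exists_pos_mul_le_psiOne {n : ℕ} {μn : ℝ}
    (h : ∀ μ ∈ Ioc 0 μn, ∀ t ∈ Ioc (0 : ℝ) 1, 0 < psiOne n μ 1 t) :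
    ∃ m > 0, ∀ μ ∈ Icc 0 μn, ∀ t ∈ Icc (0 : ℝ) 1, m * t ≤ psiOne n μ 1 t := by
  have hpos : ∀ x ∈ Icc 0 μn ×ˢ Icc 0 1, 0 < ∑' p, oddCoeff n x.1 1 p * x.2 ^ (2 * p) := by
    rintro ⟨μ, t⟩ ⟨⟨hμ0, hμ⟩, ht0, ht1⟩
    dsimp only
    rcases hμ0.eq_or_lt with rfl | hμ0
    · rw [tsum_eq_single 0 fun p hp => by
        obtain ⟨q, rfl⟩ := Nat.exists_eq_succ_of_ne_zero hp
        rw [oddCoeff_zero_succ, zero_mul]]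
      simp [oddCoeff]
    rcases ht0.eq_or_lt with rfl | ht0
    · rw [tsum_eq_single 0 fun p hp => by rw [zero_pow (by omega), mul_zero]]
      simp [oddCoeff]
    have hψ := h μ ⟨hμ0, hμ⟩ t ⟨ht0, ht1⟩
    rw [psiOne_eq_mul_tsum] at hψ
    exact pos_of_mul_pos_right hψ ht0.le
  obtain ⟨m, hm, hmF⟩ := (isCompact_Icc.prod isCompact_Icc).exists_forall_le'
    (continuousOn_tsum_oddCoeff_mul_pow n μn 1) hpos
  refine ⟨m, hm, fun μ hμ t ht => ?_⟩
  rw [psiOne_eq_mul_tsum, mul_comm m]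
  exact mul_le_mul_of_nonneg_left (hmF (μ, t) ⟨hμ, ht⟩) ht.1

lemma abs_psiTwo_le (n : ℕ) {μ μn t : ℝ} (hμ : |μ| ≤ |μn|) (ht : |t| ≤ 1) (a : ℝ) :
    |psiTwo n μ a t| ≤ |a| * (∑' p, |evenCoeff n μn 1 p|) * t ^ 2 := by
  have hterm : ∀ p, ‖evenCoeff n μ a p * t ^ (2 * p)‖ ≤ |a| * t ^ 2 * |evenCoeff n μn 1 p| := by
    intro p
    rcases Nat.eq_zero_or_pos p with rfl | hp
    · simp [evenCoeff]
    have ht2 : (t ^ 2) ^ p ≤ t ^ 2 :=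
      pow_le_of_le_one (sq_nonneg t) (by rwa [sq_le_one_iff_abs_le_one]) hp.ne'
    rw [Real.norm_eq_abs, abs_mul, evenCoeff_eq_mul, abs_mul, pow_mul,
      abs_of_nonneg (pow_nonneg (sq_nonneg t) p)]
    calc |a| * |evenCoeff n μ 1 p| * (t ^ 2) ^ p ≤ |a| * |evenCoeff n μn 1 p| * t ^ 2 := by
          gcongr |a| * ?_ * ?_
          exact abs_evenCoeff_le_of_abs_le n hμ 1 p
      _ = |a| * t ^ 2 * |evenCoeff n μn 1 p| := by ring
  rw [mul_right_comm]
  exact tsum_of_norm_bounded ((summable_abs_evenCoeff n μn 1).hasSum.mul_left _) hterm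

theorem stmt_13_general (n : ℕ) (μn : ℝ)
    (h : ∀ μ : ℝ, 0 < μ → μ ≤ μn →
      (∀ a₁ : ℝ, 0 < a₁ → ∀ t ∈ Ioc (0 : ℝ) 1, 0 < psiOne n μ a₁ t) ∧
      (∀ aN : ℝ, aN < 0 → ∀ t ∈ Ioc (0 : ℝ) 1, psiTwo n μ aN t < 0)) :
    ∃ a₁ : ℝ, 0 < a₁ ∧ ∃ aN : ℝ, aN < 0 ∧
      ∀ μ : ℝ, 0 < μ → μ ≤ μn →
        ∀ t ∈ Icc (0 : ℝ) 1, 0 ≤ psiOne n μ a₁ t + psiTwo n μ aN t := by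
  obtain ⟨m, hm, hψ₁⟩ :=
    exists_pos_mul_le_psiOne fun μ hμ t ht => (h μ hμ.1 hμ.2).1 1 one_pos t ht
  set M := ∑' p, |evenCoeff n μn 1 p|
  have hM : 0 ≤ M := tsum_nonneg fun _ => abs_nonneg _
  have hε : 0 < m / (M + 1) := by positivity
  refine ⟨1, one_pos, -(m / (M + 1)), neg_neg_of_pos hε, fun μ hμ hμn t ht => ?_⟩
  have hψ₂ := abs_psiTwo_le n (abs_le_abs_of_nonneg hμ.le hμn)
    (abs_le.2 ⟨by linarith [ht.1], ht.2⟩) (-(m / (M + 1)))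
  rw [abs_neg, abs_of_pos hε] at hψ₂
  have hεM : m / (M + 1) * M ≤ m := by
    rw [div_mul_eq_mul_div, div_le_iff₀ (by positivity)]
    nlinarith
  have ht2 : t ^ 2 ≤ t := by nlinarith [ht.1, ht.2]
  nlinarith [hψ₁ μ ⟨hμ.le, hμn⟩ t ht, neg_abs_le (psiTwo n μ (-(m / (M + 1))) t),
    mul_le_mul hεM ht2 (sq_nonneg t) hm.le]

/-- Let `n ≥ 5` be odd and `μ(n) > 0` be such that for all `0 < μ ≤ μ(n)`
one has `ψ₁ > 0` and `ψ₂ < 0` on `(0,1]` whenever `a₁ > 0` and `a_{n−1} < 0`. Then one can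
choose `a₁ > 0` and `a_{n−1} < 0` such that `ψ̄ = ψ₁ + ψ₂ ≥ 0` on `[0,1]` for all
`0 < μ ≤ μ(n)`. -/
theorem stmt_13 (n : ℕ) (hn : 5 ≤ n) (hodd : Odd n) (μn : ℝ) (hμn : 0 < μn)
    (h : ∀ μ : ℝ, 0 < μ → μ ≤ μn →
      (∀ a₁ : ℝ, 0 < a₁ → ∀ t ∈ Ioc (0 : ℝ) 1, 0 < psiOne n μ a₁ t) ∧
      (∀ aN : ℝ, aN < 0 → ∀ t ∈ Ioc (0 : ℝ) 1, psiTwo n μ aN t < 0)) :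
    ∃ a₁ : ℝ, 0 < a₁ ∧ ∃ aN : ℝ, aN < 0 ∧
      ∀ μ : ℝ, 0 < μ → μ ≤ μn →
        ∀ t ∈ Icc (0 : ℝ) 1, 0 ≤ psiOne n μ a₁ t + psiTwo n μ aN t :=
  stmt_13_general n μn h
end

section
/- Let n be an odd integer with n = 5 or n > 19, and let f₀ > 0, β < 0 be real numbers. There exists a constant M > 0, depending only on n, f₀ and β, such that for all η > 0, μ > 0 satisfying −( (n−2)² c̄₂ η β ) / ( 2 f₀ ) ≥ μ c̄₃, and for a₁ > 0, a₃ = ( 2μ / ( (n−1)(n−3) − 3 ) ) a₁, a₅ = ( 3μ / ( (n−1)(n−3) − 15 ) ) a₃, one has: −( (n−2)/(2n) + (n−1)/n ) η β a₃ − 4 f₀ ((n−1)/n) a₅ ≥ M η μ a₁. -/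
/-! For `n = 5` the denominator `(n-1)(n-3) - 15` is negative, so the `a₅`-term has a favourable
sign and the `a₃`-term alone provides `M`. For odd `n ≥ 21`, polar coordinates and two integrations
by parts give `4(n-1)(n-2) c̄₂ = n(n-4) c̄₃`, which turns the constraint into
`8 f₀ (n-1) μ ≤ n(n-2)(n-4) η (-β)`. The `a₅`-term then costs at most part of the `a₃`-term, and
what is left is positive because `n² - 22n + 24 > 0` for `n ≥ 21`. -/

open MeasureTheory Real Set Filter Topology

noncomputable def bracketMoment (a : ℕ) (b : ℝ) : ℝ :=
  ∫ r in Ioi (0 : ℝ), r ^ a * (1 + r ^ 2) ^ (-b)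

lemma continuous_pow_mul_one_add_sq_rpow (a : ℕ) (b : ℝ) :
    Continuous fun r : ℝ => r ^ a * (1 + r ^ 2) ^ b :=
  (continuous_pow a).mul <| (by fun_prop : Continuous fun r : ℝ => 1 + r ^ 2).rpow_const
    fun r => Or.inl (by positivity)

lemma pow_mul_one_add_sq_rpow_le {r : ℝ} (hr : 0 < r) (a : ℕ) {b : ℝ} (hb : b ≤ 0) :
    r ^ a * (1 + r ^ 2) ^ b ≤ r ^ ((a : ℝ) + 2 * b) := by
  calc r ^ a * (1 + r ^ 2) ^ b ≤ r ^ a * (r ^ 2) ^ b :=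
        mul_le_mul_of_nonneg_left (rpow_le_rpow_of_nonpos (by positivity) (by linarith) hb)
          (by positivity)
    _ = r ^ ((a : ℝ) + 2 * b) := by
        rw [← rpow_natCast r a, ← rpow_natCast r 2, ← rpow_mul hr.le, ← rpow_add hr]
        norm_num

lemma integrableOn_pow_mul_one_add_sq_rpow_neg (a : ℕ) {b : ℝ} (h : (a : ℝ) + 1 < 2 * b) :
    IntegrableOn (fun r : ℝ => r ^ a * (1 + r ^ 2) ^ (-b)) (Ioi 0) := by
  have hb : 0 < b := by linarith [Nat.cast_nonneg (α := ℝ) a]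
  rw [← Ioc_union_Ioi_eq_Ioi zero_le_one]
  refine (continuous_pow_mul_one_add_sq_rpow a (-b)).integrableOn_Ioc.union ?_
  refine (integrableOn_Ioi_rpow_of_lt (by linarith : (a : ℝ) + 2 * -b < -1) zero_lt_one).mono'
    (continuous_pow_mul_one_add_sq_rpow a (-b)).aestronglyMeasurable.restrict ?_
  filter_upwards [ae_restrict_mem measurableSet_Ioi] with r (hr : 1 < r)
  rw [Real.norm_eq_abs, abs_of_nonneg (by positivity)]
  exact pow_mul_one_add_sq_rpow_le (by linarith) a (by linarith)

/-- Integrate `d/dr [r^(k+1) (1 + r²)^(1-b)]` over `(0, ∞)`. -/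
lemma bracketMoment_add_two_mul (k : ℕ) {b : ℝ} (h : (k : ℝ) + 3 < 2 * b) :
    2 * (b - 1) * bracketMoment (k + 2) b = (k + 1) * bracketMoment k (b - 1) := by
  have hI₁ := integrableOn_pow_mul_one_add_sq_rpow_neg k (b := b - 1) (by linarith)
  have hI₂ := integrableOn_pow_mul_one_add_sq_rpow_neg (k + 2) (b := b) (by push_cast; linarith)
  set F : ℝ → ℝ := fun r => r ^ (k + 1) * (1 + r ^ 2) ^ (1 - b)
  have hderiv : ∀ x ∈ Ici (0 : ℝ), HasDerivAt F ((k + 1) * (x ^ k * (1 + x ^ 2) ^ (-(b - 1))) -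
      2 * (b - 1) * (x ^ (k + 2) * (1 + x ^ 2) ^ (-b))) x := by
    intro x _
    have h₁ : HasDerivAt (fun r : ℝ => 1 + r ^ 2) (2 * x) x := by
      simpa using (hasDerivAt_pow 2 x).const_add 1
    refine ((hasDerivAt_pow (k + 1) x).mul
      (h₁.rpow_const (p := 1 - b) (Or.inl (by positivity)))).congr_deriv ?_
    rw [show 1 - b - 1 = -b by ring, show -(b - 1) = 1 - b by ring]
    push_cast
    ring
  have hlim : Tendsto F atTop (𝓝 0) := by
    have hdecay := tendsto_rpow_neg_atTop
      (show 0 < -(((k + 1 : ℕ) : ℝ) + 2 * (1 - b)) by push_cast; linarith)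
    rw [neg_neg] at hdecay
    refine squeeze_zero' ?_ ?_ hdecay <;> filter_upwards [eventually_gt_atTop 0] with r hr
    · positivity
    · exact pow_mul_one_add_sq_rpow_le hr (k + 1) (by linarith)
  have hF := integral_Ioi_of_hasDerivAt_of_tendsto' hderiv
    ((hI₁.const_mul _).sub (hI₂.const_mul _)) hlim
  rw [integral_sub (hI₁.const_mul _) (hI₂.const_mul _), integral_const_mul, integral_const_mul,
    show F 0 = 0 by simp [F]] at hF
  unfold bracketMoment
  linarith

lemma bracketMoment_add_two (k : ℕ) {b : ℝ} (h : (k : ℝ) + 3 < 2 * b) :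
    bracketMoment (k + 2) b = bracketMoment k (b - 1) - bracketMoment k b := by
  unfold bracketMoment
  rw [← integral_sub (integrableOn_pow_mul_one_add_sq_rpow_neg k (by linarith))
    (integrableOn_pow_mul_one_add_sq_rpow_neg k (by linarith))]
  refine setIntegral_congr_fun measurableSet_Ioi fun r _ => ?_
  rw [show -(b - 1) = -b + 1 by ring, rpow_add (by positivity), rpow_one]
  ring

lemma bracketMoment_ratio (k : ℕ) (hk : 4 ≤ k) :
    4 * k * (k - 1) * bracketMoment (k + 2) (k + 1) =
      (k + 1) * (k - 3) * bracketMoment k (k - 1) := by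
  have hk' : (4 : ℝ) ≤ k := by exact_mod_cast hk
  have h₁ := bracketMoment_add_two_mul k (b := k + 1) (by linarith)
  have h₂ := bracketMoment_add_two_mul k (b := k) (by linarith)
  have h₃ := bracketMoment_add_two k (b := k) (by linarith)
  rw [add_sub_cancel_right] at h₁
  linear_combination 2 * (k - 1) * h₁ - (k + 1) * h₂ + 2 * (k - 1) * (k + 1) * h₃

section HaarIntegrals

open Module

variable {E : Type*} [NormedAddCommGroup E] [NormedSpace ℝ E] [FiniteDimensional ℝ E]
  [MeasurableSpace E] [BorelSpace E] (ν : Measure E) [ν.IsAddHaarMeasure]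

lemma integral_one_add_norm_sq_rpow_neg_pos {s : ℝ} (hs : (finrank ℝ E : ℝ) < 2 * s) :
    0 < ∫ x, (1 + ‖x‖ ^ 2) ^ (-s) ∂ν := by
  have hint : Integrable (fun x : E => (1 + ‖x‖ ^ 2) ^ (-s)) ν := by
    simpa [neg_div] using integrable_rpow_neg_one_add_norm_sq (μ := ν) hs
  rw [integral_pos_iff_support_of_nonneg (fun x => by positivity) hint,
    Function.support_eq_univ fun x => by positivity]
  simpa using NeZero.ne ν

lemma integral_norm_sq_mul_one_add_norm_sq_rpow_neg_eq (n : ℕ) (hE : finrank ℝ E = n)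
    (hn : 5 ≤ n) :
    4 * ((n : ℝ) - 1) * ((n : ℝ) - 2) * ∫ x, ‖x‖ ^ 2 * (1 + ‖x‖ ^ 2) ^ (-(n : ℝ)) ∂ν =
      n * ((n : ℝ) - 4) * ∫ x, (1 + ‖x‖ ^ 2) ^ (-((n : ℝ) - 2)) ∂ν := by
  have : Nontrivial E := nontrivial_of_finrank_pos (R := ℝ) (by omega)
  have hpolar₂ := integral_fun_norm_addHaar ν fun y => y ^ 2 * (1 + y ^ 2) ^ (-(n : ℝ))
  have hpolar₃ := integral_fun_norm_addHaar ν fun y => (1 + y ^ 2) ^ (-((n : ℝ) - 2))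
  simp only [hE, smul_eq_mul, nsmul_eq_mul] at hpolar₂ hpolar₃
  rw [hpolar₂, hpolar₃]
  obtain ⟨k, rfl⟩ : ∃ k, n = k + 1 := ⟨n - 1, by omega⟩
  have hmoment₂ : ∫ y in Ioi (0 : ℝ), y ^ k * (y ^ 2 * (1 + y ^ 2) ^ (-((k + 1 : ℕ) : ℝ))) =
      bracketMoment (k + 2) (k + 1) := by
    refine setIntegral_congr_fun measurableSet_Ioi fun y _ => ?_
    push_cast
    ring
  have hmoment₃ : ∫ y in Ioi (0 : ℝ), y ^ k * (1 + y ^ 2) ^ (-(((k + 1 : ℕ) : ℝ) - 2)) =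
      bracketMoment k (k - 1) := by
    refine setIntegral_congr_fun measurableSet_Ioi fun y _ => ?_
    push_cast
    ring_nf
  simp only [add_tsub_cancel_right, hmoment₂, hmoment₃]
  have := bracketMoment_ratio k (by omega)
  push_cast
  linear_combination ((k + 1 : ℝ) * ν.real (Metric.ball 0 1)) * this

lemma mul_le_of_integral_le (n : ℕ) (hE : finrank ℝ E = n) (hn : 5 ≤ n) {f₀ η β t : ℝ}
    (hf₀ : 0 < f₀)
    (h : -(((n : ℝ) - 2) ^ 2 * (∫ x, ‖x‖ ^ 2 * (1 + ‖x‖ ^ 2) ^ (-(n : ℝ)) ∂ν) * η * β) /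
        (2 * f₀) ≥ t * ∫ x, (1 + ‖x‖ ^ 2) ^ (-((n : ℝ) - 2)) ∂ν) :
    8 * f₀ * ((n : ℝ) - 1) * t ≤ n * ((n : ℝ) - 2) * ((n : ℝ) - 4) * η * -β := by
  have hN : (5 : ℝ) ≤ n := by exact_mod_cast hn
  have hc₃ := integral_one_add_norm_sq_rpow_neg_pos ν (s := (n : ℝ) - 2) (by rw [hE]; linarith)
  have hratio := integral_norm_sq_mul_one_add_norm_sq_rpow_neg_eq ν n hE hn
  set c₂ := ∫ x, ‖x‖ ^ 2 * (1 + ‖x‖ ^ 2) ^ (-(n : ℝ)) ∂ν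
  set c₃ := ∫ x, (1 + ‖x‖ ^ 2) ^ (-((n : ℝ) - 2)) ∂ν
  rw [ge_iff_le, le_div_iff₀ (by positivity)] at h
  refine le_of_mul_le_mul_left ?_ (mul_pos (by linarith : (0 : ℝ) < n - 2) hc₃)
  calc (n - 2) * c₃ * (8 * f₀ * (n - 1) * t) = 4 * (n - 1) * (n - 2) * (t * c₃ * (2 * f₀)) := by
        ring
    _ ≤ 4 * (n - 1) * (n - 2) * -((n - 2) ^ 2 * c₂ * η * β) :=
        mul_le_mul_of_nonneg_left h (by nlinarith)
    _ = (n - 2) * c₃ * (n * (n - 2) * (n - 4) * η * -β) := by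
        linear_combination -((n : ℝ) - 2) ^ 2 * η * β * hratio

end HaarIntegrals

section Coefficients

/-- The `a₃`-term equals `(3N-4)/(N((N-1)(N-3)-3)) · (-β) η μ a₁`; when the constraint holds, the
`a₅`-term costs at most `3(N-2)(N-4)/(((N-1)(N-3)-3)((N-1)(N-3)-15)) · (-β) η μ a₁`, and this is
the difference of the two coefficients. -/
noncomputable def boundConstant (N β : ℝ) : ℝ :=
  2 * -β * (N ^ 2 - 22 * N + 24) / (N * ((N - 1) * (N - 3) - 3) * ((N - 1) * (N - 3) - 15))

lemma boundConstant_pos {N β : ℝ} (hN : 21 ≤ N) (hβ : β < 0) : 0 < boundConstant N β := by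
  unfold boundConstant
  have hD₃ : 0 < (N - 1) * (N - 3) - 3 := by nlinarith
  have hD₅ : 0 < (N - 1) * (N - 3) - 15 := by nlinarith
  have hquad : 0 < N ^ 2 - 22 * N + 24 := by nlinarith
  have : 0 < N := by linarith
  have : 0 < -β := by linarith
  positivity

variable {N f₀ β η μ a₁ a₃ a₅ : ℝ}

lemma lower_bound_of_six_lt (hN : 6 < N) (hμ : 0 < μ) (ha₁ : 0 < a₁)
    (ha₃ : a₃ = 2 * μ / ((N - 1) * (N - 3) - 3) * a₁)
    (ha₅ : a₅ = 3 * μ / ((N - 1) * (N - 3) - 15) * a₃)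
    (hμ_le : 8 * f₀ * (N - 1) * μ ≤ N * (N - 2) * (N - 4) * η * -β) :
    -((N - 2) / (2 * N) + (N - 1) / N) * η * β * a₃ - 4 * f₀ * ((N - 1) / N) * a₅ ≥
      boundConstant N β * η * μ * a₁ := by
  subst ha₃ ha₅
  have hD₃ : 0 < (N - 1) * (N - 3) - 3 := by nlinarith
  have hD₅ : 0 < (N - 1) * (N - 3) - 15 := by nlinarith
  have hN₀ : 0 < N := by linarith
  have hdiff : -((N - 2) / (2 * N) + (N - 1) / N) * η * β *
        (2 * μ / ((N - 1) * (N - 3) - 3) * a₁) -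
      4 * f₀ * ((N - 1) / N) *
        (3 * μ / ((N - 1) * (N - 3) - 15) * (2 * μ / ((N - 1) * (N - 3) - 3) * a₁)) -
      boundConstant N β * η * μ * a₁ =
      3 * μ * a₁ / (N * ((N - 1) * (N - 3) - 3) * ((N - 1) * (N - 3) - 15)) *
        (N * (N - 2) * (N - 4) * η * -β - 8 * f₀ * (N - 1) * μ) := by
    unfold boundConstant
    field_simp
    ring
  rw [ge_iff_le, ← sub_nonneg, hdiff]
  exact mul_nonneg (by positivity) (by linarith)

lemma lower_bound_of_lt_six (hN₄ : 4 < N) (hN₆ : N < 6) (hf₀ : 0 < f₀)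
    (ha₁ : 0 < a₁) (ha₃ : a₃ = 2 * μ / ((N - 1) * (N - 3) - 3) * a₁)
    (ha₅ : a₅ = 3 * μ / ((N - 1) * (N - 3) - 15) * a₃) :
    -((N - 2) / (2 * N) + (N - 1) / N) * η * β * a₃ - 4 * f₀ * ((N - 1) / N) * a₅ ≥
      (3 * N - 4) / (N * ((N - 1) * (N - 3) - 3)) * -β * η * μ * a₁ := by
  subst ha₃ ha₅
  have hD₃ : 0 < (N - 1) * (N - 3) - 3 := by nlinarith
  have hD₅ : 0 < -((N - 1) * (N - 3) - 15) := by nlinarith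
  have hN₀ : 0 < N := by linarith
  have hdiff : -((N - 2) / (2 * N) + (N - 1) / N) * η * β *
        (2 * μ / ((N - 1) * (N - 3) - 3) * a₁) -
      4 * f₀ * ((N - 1) / N) *
        (3 * μ / ((N - 1) * (N - 3) - 15) * (2 * μ / ((N - 1) * (N - 3) - 3) * a₁)) -
      (3 * N - 4) / (N * ((N - 1) * (N - 3) - 3)) * -β * η * μ * a₁ =
      24 * f₀ * (N - 1) * μ ^ 2 * a₁ /
        (N * ((N - 1) * (N - 3) - 3) * -((N - 1) * (N - 3) - 15)) := by
    field_simp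
    ring
  rw [ge_iff_le, ← sub_nonneg, hdiff]
  have : 0 < N - 1 := by linarith
  positivity

end Coefficients

/-- Let `n` be odd with `n = 5` or `n > 19`, `f₀ > 0`, `β < 0`. There exists
`M > 0` (depending only on `n`, `f₀`, `β`) such that for all `η > 0`, `μ > 0` with
`−((n−2)² c̄₂ η β)/(2f₀) ≥ μ c̄₃`, and `a₁ > 0`, `a₃ = (2μ/((n−1)(n−3)−3)) a₁`,
`a₅ = (3μ/((n−1)(n−3)−15)) a₃`, one has
`−((n−2)/(2n) + (n−1)/n) η β a₃ − 4f₀((n−1)/n) a₅ ≥ M η μ a₁`. -/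
theorem stmt_15 (n : ℕ) (hodd : Odd n) (hn : n = 5 ∨ 19 < n) (f₀ β : ℝ)
    (hf₀ : 0 < f₀) (hβ : β < 0) :
    ∃ M : ℝ, 0 < M ∧
      ∀ η μ a₁ a₃ a₅ : ℝ, 0 < η → 0 < μ →
        -(((n : ℝ) - 2) ^ 2 *
              (∫ x : EuclideanSpace ℝ (Fin n), ‖x‖ ^ 2 * (1 + ‖x‖ ^ 2) ^ (-(n : ℝ))) * η * β) /
            (2 * f₀) ≥
          μ * (∫ x : EuclideanSpace ℝ (Fin n), (1 + ‖x‖ ^ 2) ^ (-((n : ℝ) - 2))) →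
        0 < a₁ →
        a₃ = 2 * μ / (((n : ℝ) - 1) * ((n : ℝ) - 3) - 3) * a₁ →
        a₅ = 3 * μ / (((n : ℝ) - 1) * ((n : ℝ) - 3) - 15) * a₃ →
        -(((n : ℝ) - 2) / (2 * (n : ℝ)) + ((n : ℝ) - 1) / (n : ℝ)) * η * β * a₃ -
            4 * f₀ * (((n : ℝ) - 1) / (n : ℝ)) * a₅ ≥ M * η * μ * a₁ := by
  rcases hn with rfl | hn
  · refine ⟨_, ?_, fun η μ a₁ a₃ a₅ _ _ _ ha₁ ha₃ ha₅ =>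
      lower_bound_of_lt_six (by norm_num) (by norm_num) hf₀ ha₁ ha₃ ha₅⟩
    norm_num
    linarith
  · have hn₂₁ : 21 ≤ n := by
      obtain ⟨k, rfl⟩ := hodd
      omega
    have hN : (21 : ℝ) ≤ n := by exact_mod_cast hn₂₁
    refine ⟨boundConstant n β, boundConstant_pos hN hβ,
      fun η μ a₁ a₃ a₅ _ hμ hμ_le ha₁ ha₃ ha₅ => ?_⟩
    exact lower_bound_of_six_lt (by linarith) hμ ha₁ ha₃ ha₅ <|
      mul_le_of_integral_le volume n finrank_euclideanSpace_fin (by omega) hf₀ hμ_le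
end
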